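/- arXiv:2112.11144 — 4 statements merged into one kernel-verified Lean document; each statement's English description precedes it below -/
import Mathlib

section
/- For all positive integers a and b there exists n₀ such that for every n ≥ n₀ there is an integer m with 1 ≤ m ≤ n−1 such that ex(n, S_{a,b}, K₃) = N(S_{a,b}, K_{m,n−m}); that is, the double star S_{a,b} is weakly K₃-Turán-good. -/
open SimpleGraph

/-- The number of subgraphs of `G` isomorphic to `H`. -/
noncomputable def copyCount {α β : Type*} (H : SimpleGraph α) (G : SimpleGraph β) : ℕ :=
  Set.ncard {G' : G.Subgraph | Nonempty (H ≃g G'.coe)}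

/-- `G` contains a subgraph isomorphic to `F`. -/
def Contains {α β : Type*} (F : SimpleGraph α) (G : SimpleGraph β) : Prop :=
  ∃ f : F →g G, Function.Injective f

/-- The generalized Turán number `ex(n, H, F)`: the maximum number of subgraphs
isomorphic to `H` in an `F`-free graph on `n` vertices. -/
noncomputable def exGen {α β : Type*} (n : ℕ) (H : SimpleGraph α) (F : SimpleGraph β) : ℕ :=
  sSup {N | ∃ G : SimpleGraph (Fin n), ¬ Contains F G ∧ N = copyCount H G}

/-- The double star `S_{a,b}`: central edge `0-1`, vertices `2,…,a+1` are leaves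
attached to `0`, and vertices `a+2,…,a+b+1` are leaves attached to `1`. -/
def doubleStar (a b : ℕ) : SimpleGraph (Fin (a + b + 2)) :=
  SimpleGraph.fromRel (fun x y =>
    (x.val = 0 ∧ y.val = 1) ∨ (x.val = 0 ∧ 2 ≤ y.val ∧ y.val < a + 2) ∨
      (x.val = 1 ∧ a + 2 ≤ y.val))

/-!
In a triangle-free graph a copy of `S_{a,b}` is determined by its central dart `(u, v)`, an
`a`-set of neighbours of `u` other than `v` and a `b`-set of neighbours of `v` other than `u`;
conversely every such triple spans a copy, since the two neighbourhoods are disjoint. A copy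
arises from exactly one triple, or from two (the two orientations of the central edge) when
`a = b`. Hence `c · N(S_{a,b}, G) = ∑_{(u,v)} C(d(u)-1, a) C(d(v)-1, b)` with `c ∈ {1, 2}`.

Triangle-freeness also gives `d(u) + d(v) ≤ n` along every edge, so the symmetrised weight of a
dart `(u, v)` is at most the weight `W(d(v)) / (d(v) (n - d(v)))` of a dart of `K_{d(v), n-d(v)}`,
where `W(m)` is the dart sum of `K_{m,n-m}`. As `n d(u) d(v) ≤ (d(u) + d(v)) d(v) (n - d(v))`,
this is at most `(max W / n) (1/d(u) + 1/d(v))`, and summing `1/d(u)` over all darts gives at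
most `n`. So the dart sum of `G` is at most `max_m W(m)`, which `K_{m,n-m}` attains.
-/

section Bridges

variable {α β γ : Type*}

theorem contains_iff_isContained {F : SimpleGraph α} {G : SimpleGraph β} :
    Contains F G ↔ F ⊑ G :=
  ⟨fun ⟨f, hf⟩ => ⟨⟨f, hf⟩⟩, fun ⟨f⟩ => ⟨f.toHom, f.injective⟩⟩

theorem not_contains_triangle_iff {G : SimpleGraph β} :
    ¬ Contains (⊤ : SimpleGraph (Fin 3)) G ↔ G.CliqueFree 3 := by
  rw [contains_iff_isContained, ← not_cliqueFree_iff_top_isContained, not_not]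

theorem copyCount_congr_left {H : SimpleGraph α} {H' : SimpleGraph β} (e : H ≃g H')
    (G : SimpleGraph γ) : _root_.copyCount H G = _root_.copyCount H' G := by
  unfold _root_.copyCount
  congr! 3 with G'
  exact ⟨fun ⟨f⟩ => ⟨e.symm.trans f⟩, fun ⟨f⟩ => ⟨e.trans f⟩⟩

theorem copyCount_congr_right (H : SimpleGraph α) {G : SimpleGraph β} {G' : SimpleGraph γ}
    (e : G ≃g G') : _root_.copyCount H G = _root_.copyCount H G' := by
  have hmap : Function.Injective fun K : G.Subgraph => K.map e.toHom := by
    refine Function.LeftInverse.injective (g := fun K => K.map e.symm.toHom) fun K => ?_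
    show (K.map e.toHom).map e.symm.toHom = K
    rw [← Subgraph.map_comp]
    convert K.map_id
    ext; simp
  have hrange : Set.range (Copy.toSubgraph : Copy H G' → G'.Subgraph) =
      (fun K => K.map e.toHom) '' Set.range (Copy.toSubgraph : Copy H G → G.Subgraph) := by
    rw [← Set.range_comp]
    apply Set.Subset.antisymm
    · rintro K ⟨f, rfl⟩
      refine ⟨e.symm.toCopy.comp f, ?_⟩
      simp only [Function.comp_apply, Copy.toSubgraph, ← Subgraph.map_comp]
      congr 1; ext; simp [Copy.comp]
    · rintro K ⟨f, rfl⟩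
      refine ⟨e.toCopy.comp f, ?_⟩
      simp only [Function.comp_apply, Copy.toSubgraph, ← Subgraph.map_comp]
      rfl
  unfold _root_.copyCount
  rw [← Copy.range_toSubgraph, ← Copy.range_toSubgraph, hrange,
    Set.ncard_image_of_injective _ hmap]

end Bridges

def doubleStarOn (α β : Type*) : SimpleGraph (Bool ⊕ α ⊕ β) :=
  SimpleGraph.fromRel fun p q =>
    match p, q with
    | .inl false, .inl true => True
    | .inl false, .inr (.inl _) => True
    | .inl true, .inr (.inr _) => True
    | _, _ => False

def doubleStarEquiv (a b : ℕ) : Bool ⊕ Fin a ⊕ Fin b ≃ Fin (a + b + 2) :=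
  (Equiv.sumCongr finTwoEquiv.symm finSumFinEquiv).trans
    (finSumFinEquiv.trans (finCongr (by omega)))

def doubleStarIso (a b : ℕ) : doubleStarOn (Fin a) (Fin b) ≃g doubleStar a b where
  toEquiv := doubleStarEquiv a b
  map_rel_iff' {p q} := by
    rcases p with (_ | _) | (i | j) <;> rcases q with (_ | _) | (i' | j') <;>
      simp [doubleStarOn, doubleStar, doubleStarEquiv, finTwoEquiv, Fin.ext_iff,
        -Fin.val_eq_zero_iff]

theorem SimpleGraph.CliqueFree.not_adj_of_adj_of_adj {V : Type*} {G : SimpleGraph V}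
    (hG : G.CliqueFree 3) {x y z : V} (hxy : G.Adj x y) (hxz : G.Adj x z) : ¬ G.Adj y z :=
  fun hyz => by classical exact hG {x, y, z} (is3Clique_triple_iff.2 ⟨hxy, hxz, hyz⟩)

section StarSubgraph

open Finset

variable {V : Type*} {G : SimpleGraph V} {t : G.Dart × Finset V × Finset V}

def starSubgraph (G : SimpleGraph V) (t : G.Dart × Finset V × Finset V) : G.Subgraph where
  verts := {t.1.fst, t.1.snd} ∪ ↑t.2.1 ∪ ↑t.2.2
  Adj x y := G.Adj x y ∧
    ((x = t.1.fst ∧ (y = t.1.snd ∨ y ∈ t.2.1) ∨ x = t.1.snd ∧ y ∈ t.2.2) ∨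
      (y = t.1.fst ∧ (x = t.1.snd ∨ x ∈ t.2.1) ∨ y = t.1.snd ∧ x ∈ t.2.2))
  adj_sub h := h.1
  edge_vert := by
    rintro x y ⟨-, h⟩
    simp only [Set.mem_union, Set.mem_insert_iff, Set.mem_singleton_iff, Finset.mem_coe]
    tauto
  symm := ⟨fun _ _ ⟨h, h'⟩ => ⟨h.symm, h'.symm⟩⟩

theorem starSubgraph_swap : starSubgraph G (t.1.symm, t.2.2, t.2.1) = starSubgraph G t := by
  ext x y
  · simp only [starSubgraph, Dart.symm_toProd, Prod.fst_swap, Prod.snd_swap, Set.mem_union,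
      Set.mem_insert_iff, Set.mem_singleton_iff]
    tauto
  · simp only [starSubgraph, Dart.symm_toProd, Prod.fst_swap, Prod.snd_swap]
    tauto

variable {α β : Type*} [Fintype α] [Fintype β] [DecidableEq V]

def SimpleGraph.Copy.starTuple (f : Copy (doubleStarOn α β) G) : G.Dart × Finset V × Finset V :=
  (⟨(f (.inl false), f (.inl true)), f.toHom.map_adj (by simp [doubleStarOn])⟩,
    univ.image (f ∘ .inr ∘ .inl), univ.image (f ∘ .inr ∘ .inr))

theorem SimpleGraph.Copy.toSubgraph_eq_starSubgraph (f : Copy (doubleStarOn α β) G) :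
    f.toSubgraph = starSubgraph G f.starTuple := by
  ext x y
  · simp [starSubgraph, Copy.starTuple, Sum.exists, or_assoc, eq_comm]
  · simp only [Subgraph.map_adj, Relation.Map, Subgraph.top_adj]
    constructor
    · rintro ⟨p, q, hpq, rfl, rfl⟩
      refine ⟨f.toHom.map_adj hpq, ?_⟩
      rcases p with (_ | _) | (i | j) <;> rcases q with (_ | _) | (i' | j') <;>
        simp [doubleStarOn] at hpq <;> simp [Copy.starTuple]
    · rintro ⟨-, h⟩
      simp only [Copy.starTuple, mem_image, mem_univ, true_and, Function.comp_apply] at h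
      rcases h with (⟨rfl, rfl | ⟨i, rfl⟩⟩ | ⟨rfl, j, rfl⟩) |
          (⟨rfl, rfl | ⟨i, rfl⟩⟩ | ⟨rfl, j, rfl⟩) <;>
        exact ⟨_, _, by simp [doubleStarOn], rfl, rfl⟩

end StarSubgraph

-- The number of copies of `S_{a,b}` in a triangle-free graph with a given centre dart `(u, v)`,
-- `u` carrying the `a` leaves, when `d(u) = x` and `d(v) = y`.
def starWeight (a b x y : ℕ) : ℕ := (x - 1).choose a * (y - 1).choose b

section StarTuples

open Finset

variable {V : Type*} [Fintype V] [DecidableEq V] {G : SimpleGraph V} [DecidableRel G.Adj]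
  {a b : ℕ} {t t' : G.Dart × Finset V × Finset V}

def starTuples (G : SimpleGraph V) [DecidableRel G.Adj] (a b : ℕ) :
    Finset (G.Dart × Finset V × Finset V) :=
  (univ.sigma fun d : G.Dart => ((G.neighborFinset d.fst).erase d.snd).powersetCard a ×ˢ
    ((G.neighborFinset d.snd).erase d.fst).powersetCard b).map
      (Equiv.sigmaEquivProd _ _).toEmbedding

theorem mem_starTuples : t ∈ starTuples G a b ↔
    (t.2.1 ⊆ (G.neighborFinset t.1.fst).erase t.1.snd ∧ #t.2.1 = a) ∧
      t.2.2 ⊆ (G.neighborFinset t.1.snd).erase t.1.fst ∧ #t.2.2 = b := by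
  simp [starTuples, mem_powersetCard]

theorem card_starTuples :
    #(starTuples G a b) = ∑ d : G.Dart, starWeight a b (G.degree d.fst) (G.degree d.snd) := by
  simp [starTuples, card_sigma, card_powersetCard, card_erase_of_mem, starWeight, G.adj_comm]

theorem adj_of_mem_starTuples (ht : t ∈ starTuples G a b) :
    (∀ x ∈ t.2.1, G.Adj t.1.fst x) ∧ ∀ x ∈ t.2.2, G.Adj t.1.snd x := by
  rw [mem_starTuples] at ht
  exact ⟨fun x hx => by simpa using (mem_erase.1 (ht.1.1 hx)).2,
    fun x hx => by simpa using (mem_erase.1 (ht.2.1 hx)).2⟩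

theorem centres_notMem_of_mem_starTuples (ht : t ∈ starTuples G a b) :
    (t.1.fst ∉ t.2.1 ∧ t.1.snd ∉ t.2.1) ∧ t.1.fst ∉ t.2.2 ∧ t.1.snd ∉ t.2.2 := by
  have hadj := adj_of_mem_starTuples ht
  rw [mem_starTuples] at ht
  exact ⟨⟨fun h => G.irrefl (hadj.1 _ h), fun h => (mem_erase.1 (ht.1.1 h)).1 rfl⟩,
    fun h => (mem_erase.1 (ht.2.1 h)).1 rfl, fun h => G.irrefl (hadj.2 _ h)⟩

theorem disjoint_of_mem_starTuples (hG : G.CliqueFree 3) (ht : t ∈ starTuples G a b) :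
    Disjoint t.2.1 t.2.2 := by
  obtain ⟨hA, hB⟩ := adj_of_mem_starTuples ht
  exact disjoint_left.2 fun x hxA hxB =>
    hG.not_adj_of_adj_of_adj (hA x hxA) t.1.adj (hB x hxB).symm

theorem starSubgraph_adj_iff (ht : t ∈ starTuples G a b) {x y : V} :
    (starSubgraph G t).Adj x y ↔
      (x = t.1.fst ∧ (y = t.1.snd ∨ y ∈ t.2.1) ∨ x = t.1.snd ∧ y ∈ t.2.2) ∨
        (y = t.1.fst ∧ (x = t.1.snd ∨ x ∈ t.2.1) ∨ y = t.1.snd ∧ x ∈ t.2.2) := by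
  obtain ⟨hA, hB⟩ := adj_of_mem_starTuples ht
  refine and_iff_right_of_imp ?_
  rintro ((⟨rfl, rfl | h⟩ | ⟨rfl, h⟩) | (⟨rfl, rfl | h⟩ | ⟨rfl, h⟩))
  exacts [t.1.adj, hA _ h, hB _ h, t.1.adj.symm, (hA _ h).symm, (hB _ h).symm]

end StarTuples

section Correspondence

open Finset

variable {V : Type*} [Fintype V] [DecidableEq V] {G : SimpleGraph V} [DecidableRel G.Adj]
  {α β : Type*} [Fintype α] [Fintype β] {t : G.Dart × Finset V × Finset V}

theorem SimpleGraph.Copy.starTuple_mem_starTuples (f : Copy (doubleStarOn α β) G) :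
    f.starTuple ∈ starTuples G (Fintype.card α) (Fintype.card β) := by
  have hinj : Function.Injective f := f.injective
  simp only [mem_starTuples, Copy.starTuple, subset_iff, mem_image, mem_univ, true_and,
    mem_erase, mem_neighborFinset, Function.comp_apply, forall_exists_index,
    forall_apply_eq_imp_iff]
  refine ⟨⟨fun i => ⟨hinj.ne (by simp), f.toHom.map_adj (by simp [doubleStarOn])⟩, ?_⟩,
    fun j => ⟨hinj.ne (by simp), f.toHom.map_adj (by simp [doubleStarOn])⟩, ?_⟩
  · rw [card_image_of_injective _ (hinj.comp (Sum.inr_injective.comp Sum.inl_injective)),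
      card_univ]
  · rw [card_image_of_injective _ (hinj.comp (Sum.inr_injective.comp Sum.inr_injective)),
      card_univ]

theorem exists_copy_starTuple_eq (hG : G.CliqueFree 3)
    (ht : t ∈ starTuples G (Fintype.card α) (Fintype.card β)) :
    ∃ f : Copy (doubleStarOn α β) G, f.starTuple = t := by
  obtain ⟨hA, hB⟩ := adj_of_mem_starTuples ht
  obtain ⟨⟨hfA, hsA⟩, hfB, hsB⟩ := centres_notMem_of_mem_starTuples ht
  have hAB := disjoint_left.1 (disjoint_of_mem_starTuples hG ht)
  obtain ⟨⟨-, hcardA⟩, -, hcardB⟩ := mem_starTuples.1 ht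
  obtain ⟨d, A, B⟩ := t
  dsimp only at *
  let eA : α ≃ A := Fintype.equivOfCardEq (by rw [Fintype.card_coe, hcardA])
  let eB : β ≃ B := Fintype.equivOfCardEq (by rw [Fintype.card_coe, hcardB])
  let f : Bool ⊕ α ⊕ β → V :=
    Sum.elim (fun c => cond c d.snd d.fst) (Sum.elim (fun i => eA i) (fun j => eB j))
  have hf (p q) (hpq : (doubleStarOn α β).Adj p q) : G.Adj (f p) (f q) := by
    rcases p with (_ | _) | (i | j) <;> rcases q with (_ | _) | (i' | j') <;>
      simp [doubleStarOn] at hpq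
    exacts [d.adj, hA _ (eA _).2, d.adj.symm, hB _ (eB _).2, (hA _ (eA _).2).symm,
      (hB _ (eB _).2).symm]
  have hinj : Function.Injective f := by
    refine .sumElim (fun c c' h => ?_) (.sumElim (Subtype.val_injective.comp eA.injective)
      (Subtype.val_injective.comp eB.injective) fun i j h => hAB (eA i).2 (h ▸ (eB j).2)) ?_
    · cases c <;> cases c' <;> simp_all [d.fst_ne_snd, d.snd_ne_fst]
    · rintro (_ | _) (i | j) h <;> simp only [cond, Sum.elim_inl, Sum.elim_inr] at h
      exacts [hfA (h ▸ (eA i).2), hfB (h ▸ (eB j).2), hsA (h ▸ (eA i).2),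
        hsB (h ▸ (eB j).2)]
  refine ⟨⟨⟨f, hf _ _⟩, hinj⟩, Prod.ext (Dart.ext _ _ rfl) (Prod.ext ?_ ?_)⟩
  · show univ.image (Subtype.val ∘ eA) = A
    rw [← image_image, image_univ_equiv, univ_eq_attach, attach_image_val]
  · show univ.image (Subtype.val ∘ eB) = B
    rw [← image_image, image_univ_equiv, univ_eq_attach, attach_image_val]

end Correspondence

section Fibres

open Finset

variable {V : Type*} [Fintype V] [DecidableEq V] {G : SimpleGraph V} [DecidableRel G.Adj]
  {a b : ℕ} {t t' : G.Dart × Finset V × Finset V}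

theorem neighborSet_starSubgraph_fst (ht : t ∈ starTuples G a b) :
    (starSubgraph G t).neighborSet t.1.fst = insert t.1.snd ↑t.2.1 := by
  obtain ⟨⟨hfA, -⟩, hfB, -⟩ := centres_notMem_of_mem_starTuples ht
  ext y
  simp [starSubgraph_adj_iff ht, hfA, hfB, t.1.fst_ne_snd]

theorem neighborSet_starSubgraph_snd (ht : t ∈ starTuples G a b) :
    (starSubgraph G t).neighborSet t.1.snd = insert t.1.fst ↑t.2.2 := by
  obtain ⟨⟨-, hsA⟩, -, hsB⟩ := centres_notMem_of_mem_starTuples ht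
  ext y
  simp [starSubgraph_adj_iff ht, hsA, hsB, t.1.snd_ne_fst, or_comm]

theorem nontrivial_neighborSet_starSubgraph_iff (hG : G.CliqueFree 3) (ha : 0 < a) (hb : 0 < b)
    (ht : t ∈ starTuples G a b) {x : V} :
    ((starSubgraph G t).neighborSet x).Nontrivial ↔ x = t.1.fst ∨ x = t.1.snd := by
  obtain ⟨⟨-, hsA⟩, hfB, -⟩ := centres_notMem_of_mem_starTuples ht
  have hcard := mem_starTuples.1 ht
  constructor
  · rintro ⟨y, hy, z, hz, hyz⟩
    by_contra! hx
    have hAB := disjoint_left.1 (disjoint_of_mem_starTuples hG ht)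
    rw [Subgraph.mem_neighborSet, starSubgraph_adj_iff ht] at hy hz
    simp only [hx.1, hx.2, false_and, false_or] at hy hz
    rcases hy with ⟨rfl, hxA⟩ | ⟨rfl, hxB⟩ <;>
      rcases hz with ⟨rfl, hxA'⟩ | ⟨rfl, hxB'⟩
    exacts [hyz rfl, hAB hxA hxB', hAB hxA' hxB, hyz rfl]
  · rintro (rfl | rfl)
    · obtain ⟨y, hy⟩ := card_pos.1 (ha.trans_eq hcard.1.2.symm)
      rw [neighborSet_starSubgraph_fst ht]
      exact Set.nontrivial_of_mem_mem_ne (Set.mem_insert _ _) (Set.mem_insert_of_mem _ hy)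
        fun h => hsA (h ▸ hy)
    · obtain ⟨y, hy⟩ := card_pos.1 (hb.trans_eq hcard.2.2.symm)
      rw [neighborSet_starSubgraph_snd ht]
      exact Set.nontrivial_of_mem_mem_ne (Set.mem_insert _ _) (Set.mem_insert_of_mem _ hy)
        fun h => hfB (h ▸ hy)

theorem coe_leaves_eq_of_mem_starTuples (ht : t ∈ starTuples G a b) :
    (t.2.1 : Set V) = (starSubgraph G t).neighborSet t.1.fst \ {t.1.snd} ∧
      (t.2.2 : Set V) = (starSubgraph G t).neighborSet t.1.snd \ {t.1.fst} := by
  obtain ⟨⟨-, hsA⟩, hfB, -⟩ := centres_notMem_of_mem_starTuples ht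
  rw [neighborSet_starSubgraph_fst ht, neighborSet_starSubgraph_snd ht,
    Set.insert_sdiff_self_of_notMem (by simpa using hsA),
    Set.insert_sdiff_self_of_notMem (by simpa using hfB)]
  exact ⟨rfl, rfl⟩

theorem swap_mem_starTuples (ht : t ∈ starTuples G a b) :
    (t.1.symm, t.2.2, t.2.1) ∈ starTuples G b a := by
  rw [mem_starTuples] at ht ⊢
  exact ⟨ht.2, ht.1⟩

theorem eq_or_eq_swap_of_starSubgraph_eq (hG : G.CliqueFree 3) (ha : 0 < a) (hb : 0 < b)
    (ht : t ∈ starTuples G a b) (ht' : t' ∈ starTuples G a b)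
    (h : starSubgraph G t' = starSubgraph G t) :
    t' = t ∨ a = b ∧ t' = (t.1.symm, t.2.2, t.2.1) := by
  have hcentre (x : V) : x = t'.1.fst ∨ x = t'.1.snd ↔ x = t.1.fst ∨ x = t.1.snd := by
    rw [← nontrivial_neighborSet_starSubgraph_iff hG ha hb ht',
      ← nontrivial_neighborSet_starSubgraph_iff hG ha hb ht, h]
  have h1 := (hcentre t'.1.fst).1 (.inl rfl)
  have h2 := (hcentre t'.1.snd).1 (.inr rfl)
  obtain ⟨hA, hB⟩ := coe_leaves_eq_of_mem_starTuples ht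
  obtain ⟨hA', hB'⟩ := coe_leaves_eq_of_mem_starTuples ht'
  obtain ⟨d, A, B⟩ := t
  obtain ⟨d', A', B'⟩ := t'
  dsimp only at h1 h2 hA hB hA' hB' ⊢
  rw [h] at hA' hB'
  rcases h1 with h1 | h1 <;> rcases h2 with h2 | h2
  · exact absurd (h1.trans h2.symm) d'.fst_ne_snd
  · obtain rfl : d' = d := Dart.ext _ _ (Prod.ext h1 h2)
    exact .inl (by rw [coe_injective (hA'.trans hA.symm), coe_injective (hB'.trans hB.symm)])
  · obtain rfl : d' = d.symm := Dart.ext _ _ (Prod.ext h1 h2)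
    have hAB := coe_injective (hA'.trans hB.symm)
    subst hAB
    exact .inr ⟨(mem_starTuples.1 ht').1.2.symm.trans (mem_starTuples.1 ht).2.2,
      by rw [coe_injective (hB'.trans hA.symm)]⟩
  · exact absurd (h1.trans h2.symm) d'.fst_ne_snd

end Fibres

section Counting

open Finset

variable {V : Type*} [Fintype V] [DecidableEq V] {G : SimpleGraph V} [DecidableRel G.Adj]

theorem range_toSubgraph_eq_image_starTuples {α β : Type*} [Fintype α] [Fintype β]
    (hG : G.CliqueFree 3) :
    Set.range (Copy.toSubgraph : Copy (doubleStarOn α β) G → G.Subgraph) =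
      starSubgraph G '' starTuples G (Fintype.card α) (Fintype.card β) := by
  ext K
  constructor
  · rintro ⟨f, rfl⟩
    exact ⟨f.starTuple, f.starTuple_mem_starTuples, f.toSubgraph_eq_starSubgraph.symm⟩
  · rintro ⟨t, ht, rfl⟩
    obtain ⟨f, rfl⟩ := exists_copy_starTuple_eq hG ht
    exact ⟨f, f.toSubgraph_eq_starSubgraph⟩

open Classical in
theorem card_filter_starSubgraph_eq (hG : G.CliqueFree 3) {a b : ℕ} (ha : 0 < a) (hb : 0 < b)
    {t : G.Dart × Finset V × Finset V} (ht : t ∈ starTuples G a b) :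
    #{t' ∈ starTuples G a b | starSubgraph G t' = starSubgraph G t} = if a = b then 2 else 1 := by
  split_ifs with hab
  · subst hab
    rw [card_eq_two]
    refine ⟨t, (t.1.symm, t.2.2, t.2.1), fun h => t.1.symm_ne (congrArg Prod.fst h).symm, ?_⟩
    ext t'
    simp only [mem_filter, mem_insert, mem_singleton]
    constructor
    · rintro ⟨ht', h⟩
      exact (eq_or_eq_swap_of_starSubgraph_eq hG ha ha ht ht' h).imp_right And.right
    · rintro (rfl | rfl)
      exacts [⟨ht, rfl⟩, ⟨swap_mem_starTuples ht, starSubgraph_swap⟩]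
  · rw [card_eq_one]
    refine ⟨t, ?_⟩
    ext t'
    simp only [mem_filter, mem_singleton]
    constructor
    · rintro ⟨ht', h⟩
      exact (eq_or_eq_swap_of_starSubgraph_eq hG ha hb ht ht' h).resolve_right fun h => hab h.1
    · rintro rfl
      exact ⟨ht, rfl⟩

theorem mul_copyCount_doubleStarOn {α β : Type*} [Fintype α] [Fintype β] [Nonempty α]
    [Nonempty β] (hG : G.CliqueFree 3) :
    (if Fintype.card α = Fintype.card β then 2 else 1) * _root_.copyCount (doubleStarOn α β) G =
      ∑ d : G.Dart,
        starWeight (Fintype.card α) (Fintype.card β) (G.degree d.fst) (G.degree d.snd) := by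
  classical
  have hcopy : _root_.copyCount (doubleStarOn α β) G =
      #((starTuples G (Fintype.card α) (Fintype.card β)).image (starSubgraph G)) := by
    rw [_root_.copyCount, ← Copy.range_toSubgraph, range_toSubgraph_eq_image_starTuples hG,
      ← coe_image, Set.ncard_coe_finset]
  rw [hcopy, ← card_starTuples, card_eq_sum_card_image (starSubgraph G), mul_comm,
    ← smul_eq_mul, ← sum_const]
  refine sum_congr rfl fun K hK => ?_
  obtain ⟨t, ht, rfl⟩ := mem_image.1 hK
  exact (card_filter_starSubgraph_eq hG Fintype.card_pos Fintype.card_pos ht).symm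

end Counting

section DartSums

open Finset

variable {V : Type*} [Fintype V] {G : SimpleGraph V} [DecidableRel G.Adj]

theorem SimpleGraph.sum_dart_swap {M : Type*} [AddCommMonoid M] (g : V → V → M) :
    ∑ d : G.Dart, g d.snd d.fst = ∑ d : G.Dart, g d.fst d.snd :=
  Equiv.sum_comp (Dart.symm_involutive.toPerm _) fun d => g d.fst d.snd

variable [DecidableEq V]

theorem SimpleGraph.sum_dart_fst {M : Type*} [AddCommMonoid M] (f : V → M) :
    ∑ d : G.Dart, f d.fst = ∑ v, G.degree v • f v := by
  rw [← sum_fiberwise' univ (fun d : G.Dart => d.fst) f]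
  simp only [sum_const, G.dart_fst_fiber_card_eq_degree]

theorem SimpleGraph.sum_dart_inv_degree_fst_le :
    ∑ d : G.Dart, ((G.degree d.fst : ℚ))⁻¹ ≤ Fintype.card V := by
  rw [G.sum_dart_fst fun v => ((G.degree v : ℚ))⁻¹, ← card_univ, card_eq_sum_ones,
    Nat.cast_sum]
  exact sum_le_sum fun v _ => by simpa only [nsmul_eq_mul, Nat.cast_one] using mul_inv_le_one

theorem SimpleGraph.CliqueFree.degree_add_degree_le (hG : G.CliqueFree 3) {u v : V}
    (h : G.Adj u v) : G.degree u + G.degree v ≤ Fintype.card V := by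
  rw [← card_neighborFinset_eq_degree, ← card_neighborFinset_eq_degree,
    ← card_union_of_disjoint (Finset.disjoint_left.2 fun w hu hv => hG.not_adj_of_adj_of_adj
      ((mem_neighborFinset _ _ _).1 hu) h ((mem_neighborFinset _ _ _).1 hv).symm)]
  exact card_le_univ _

end DartSums

-- The dart sum of `starWeight` over `K_{m, n-m}`.
def bipartiteWeight (n a b m : ℕ) : ℕ :=
  m * (n - m) * (starWeight a b (n - m) m + starWeight a b m (n - m))

theorem starWeight_add_starWeight_mul_le {n a b M x y : ℕ} (hx : 1 ≤ x) (hy : 1 ≤ y)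
    (hxy : x + y ≤ n) (hM : ∀ m ∈ Finset.Icc 1 (n - 1), bipartiteWeight n a b m ≤ M) :
    (starWeight a b x y + starWeight a b y x) * (n * x * y) ≤ M * (x + y) := by
  -- Compare with a dart of `K_{y, n-y}`: its tail has degree `n - y ≥ x`.
  have hle : x - 1 ≤ n - y - 1 := by omega
  have hpair : starWeight a b x y + starWeight a b y x ≤
      starWeight a b (n - y) y + starWeight a b y (n - y) :=
    add_le_add (Nat.mul_le_mul_right _ (Nat.choose_le_choose a hle))
      (Nat.mul_le_mul_left _ (Nat.choose_le_choose b hle))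
  -- The difference is `y² (n - x - y)`.
  have hcore : n * x * y ≤ (x + y) * (y * (n - y)) := by
    obtain ⟨k, rfl⟩ : ∃ k, n = x + y + k := ⟨n - (x + y), by omega⟩
    rw [show x + y + k - y = x + k by omega]
    nlinarith [Nat.zero_le (y * y * k)]
  calc (starWeight a b x y + starWeight a b y x) * (n * x * y)
      ≤ (starWeight a b (n - y) y + starWeight a b y (n - y)) * ((x + y) * (y * (n - y))) :=
        Nat.mul_le_mul hpair hcore
    _ = bipartiteWeight n a b y * (x + y) := by unfold bipartiteWeight; ring
    _ ≤ M * (x + y) := Nat.mul_le_mul_right _ (hM y (Finset.mem_Icc.2 ⟨hy, by omega⟩))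

section Bound

open Finset

variable {V : Type*} [Fintype V] [DecidableEq V] {G : SimpleGraph V} [DecidableRel G.Adj]
  {a b M : ℕ}

theorem SimpleGraph.CliqueFree.starWeight_add_starWeight_mul_card_le (hG : G.CliqueFree 3)
    (hM : ∀ m ∈ Icc 1 (Fintype.card V - 1), bipartiteWeight (Fintype.card V) a b m ≤ M)
    (d : G.Dart) :
    ((starWeight a b (G.degree d.fst) (G.degree d.snd) : ℚ) +
        starWeight a b (G.degree d.snd) (G.degree d.fst)) * Fintype.card V ≤
      M * (((G.degree d.fst : ℚ))⁻¹ + ((G.degree d.snd : ℚ))⁻¹) := by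
  have hx : 1 ≤ G.degree d.fst := G.degree_pos_iff_exists_adj _ |>.2 ⟨_, d.adj⟩
  have hy : 1 ≤ G.degree d.snd := G.degree_pos_iff_exists_adj _ |>.2 ⟨_, d.adj.symm⟩
  have key := Nat.cast_le (α := ℚ) |>.2 <|
    starWeight_add_starWeight_mul_le hx hy (hG.degree_add_degree_le d.adj) hM
  have hxq : (0 : ℚ) < G.degree d.fst := by exact_mod_cast hx
  have hyq : (0 : ℚ) < G.degree d.snd := by exact_mod_cast hy
  rw [inv_add_inv hxq.ne' hyq.ne', mul_div_assoc', le_div_iff₀ (by positivity)]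
  push_cast at key
  linarith

theorem SimpleGraph.CliqueFree.sum_dart_starWeight_le (hG : G.CliqueFree 3)
    (hM : ∀ m ∈ Icc 1 (Fintype.card V - 1), bipartiteWeight (Fintype.card V) a b m ≤ M) :
    ∑ d : G.Dart, starWeight a b (G.degree d.fst) (G.degree d.snd) ≤ M := by
  set n := Fintype.card V
  rcases Nat.eq_zero_or_pos n with hn | hn
  · have : IsEmpty G.Dart := ⟨fun d => (Fintype.card_eq_zero_iff.1 hn).false d.fst⟩
    simp
  let w (u v : V) : ℚ := starWeight a b (G.degree u) (G.degree v)
  let ι (u : V) : ℚ := ((G.degree u : ℚ))⁻¹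
  have hsum : (2 * ∑ d : G.Dart, w d.fst d.snd) * n ≤ (2 * M) * n := calc
    (2 * ∑ d : G.Dart, w d.fst d.snd) * n =
        ∑ d : G.Dart, (w d.fst d.snd + w d.snd d.fst) * n := by
      rw [← sum_mul, sum_add_distrib, G.sum_dart_swap w]
      ring
    _ ≤ ∑ d : G.Dart, M * (ι d.fst + ι d.snd) :=
      sum_le_sum fun d _ => hG.starWeight_add_starWeight_mul_card_le hM d
    _ = M * (2 * ∑ d : G.Dart, ι d.fst) := by
      rw [← mul_sum, sum_add_distrib, G.sum_dart_swap fun u _ => ι u]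
      ring
    _ ≤ (2 * M) * n := by
      have := G.sum_dart_inv_degree_fst_le
      nlinarith
  have : ∑ d : G.Dart, w d.fst d.snd ≤ M := by
    nlinarith [show (0 : ℚ) < n by exact_mod_cast hn]
  simp only [w] at this
  exact_mod_cast this

end Bound

theorem cliqueFree_three_completeBipartiteGraph (α β : Type*) :
    (completeBipartiteGraph α β).CliqueFree 3 :=
  (CompleteBipartiteGraph.bicoloring α β).colorable.cliqueFree (by simp)

section CompleteBipartite

open Finset

variable {α β : Type*} [Fintype α] [Fintype β] [DecidableRel (completeBipartiteGraph α β).Adj]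

theorem completeBipartiteGraph_degree_inl (i : α) :
    (completeBipartiteGraph α β).degree (.inl i) = Fintype.card β := by
  have h : (completeBipartiteGraph α β).neighborSet (.inl i) = Set.range .inr := by
    ext (j | j) <;> simp
  rw [← card_neighborSet_eq_degree, ← Nat.card_eq_fintype_card, h,
    Nat.card_range_of_injective Sum.inr_injective, Nat.card_eq_fintype_card]

theorem completeBipartiteGraph_degree_inr (j : β) :
    (completeBipartiteGraph α β).degree (.inr j) = Fintype.card α := by
  have h : (completeBipartiteGraph α β).neighborSet (.inr j) = Set.range .inl := by
    ext (i | i) <;> simp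
  rw [← card_neighborSet_eq_degree, ← Nat.card_eq_fintype_card, h,
    Nat.card_range_of_injective Sum.inl_injective, Nat.card_eq_fintype_card]

theorem sum_dart_starWeight_completeBipartiteGraph [DecidableEq α] [DecidableEq β] (a b : ℕ) :
    ∑ d : (completeBipartiteGraph α β).Dart, starWeight a b
        ((completeBipartiteGraph α β).degree d.fst) ((completeBipartiteGraph α β).degree d.snd) =
      Fintype.card α * Fintype.card β * (starWeight a b (Fintype.card β) (Fintype.card α) +
        starWeight a b (Fintype.card α) (Fintype.card β)) := by
  let H : α ⊕ β → ℕ := Sum.elim (fun _ => starWeight a b (Fintype.card β) (Fintype.card α))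
    (fun _ => starWeight a b (Fintype.card α) (Fintype.card β))
  have hH (d : (completeBipartiteGraph α β).Dart) : starWeight a b
      ((completeBipartiteGraph α β).degree d.fst) ((completeBipartiteGraph α β).degree d.snd) =
        H d.fst := by
    obtain ⟨⟨u | u, v | v⟩, h⟩ := d <;> simp at h <;>
      simp [H, completeBipartiteGraph_degree_inl, completeBipartiteGraph_degree_inr]
  rw [sum_congr rfl fun d _ => hH d, sum_dart_fst, Fintype.sum_sum_type]
  simp only [completeBipartiteGraph_degree_inl, completeBipartiteGraph_degree_inr, H,
    Sum.elim_inl, Sum.elim_inr, sum_const, card_univ, smul_eq_mul]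
  ring

end CompleteBipartite

section Extremal

variable {V : Type*} [Fintype V] [DecidableEq V] {G : SimpleGraph V} [DecidableRel G.Adj]
  {a b : ℕ}

theorem mul_copyCount_doubleStar (ha : 0 < a) (hb : 0 < b) (hG : G.CliqueFree 3) :
    (if a = b then 2 else 1) * _root_.copyCount (doubleStar a b) G =
      ∑ d : G.Dart, starWeight a b (G.degree d.fst) (G.degree d.snd) := by
  have : Nonempty (Fin a) := Fin.pos_iff_nonempty.1 ha
  have : Nonempty (Fin b) := Fin.pos_iff_nonempty.1 hb
  simpa [← copyCount_congr_left (doubleStarIso a b)] using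
    mul_copyCount_doubleStarOn (α := Fin a) (β := Fin b) hG

theorem copyCount_doubleStar_le_completeBipartiteGraph (ha : 0 < a) (hb : 0 < b)
    (hG : G.CliqueFree 3) {n m : ℕ} (hn : Fintype.card V = n)
    (hmax : ∀ m' ∈ Finset.Icc 1 (n - 1), bipartiteWeight n a b m' ≤ bipartiteWeight n a b m) :
    _root_.copyCount (doubleStar a b) G ≤
      _root_.copyCount (doubleStar a b) (completeBipartiteGraph (Fin m) (Fin (n - m))) := by
  classical
  subst hn
  refine Nat.le_of_mul_le_mul_left ?_ (show 0 < if a = b then 2 else 1 by split_ifs <;> norm_num)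
  rw [mul_copyCount_doubleStar ha hb hG,
    mul_copyCount_doubleStar ha hb (cliqueFree_three_completeBipartiteGraph _ _),
    sum_dart_starWeight_completeBipartiteGraph, Fintype.card_fin, Fintype.card_fin]
  exact hG.sum_dart_starWeight_le hmax

end Extremal

/-- the double star `S_{a,b}` is weakly `K₃`-Turán-good. -/
theorem doubleStar_weakly_K3_turan_good (a b : ℕ) (ha : 0 < a) (hb : 0 < b) :
    ∃ n₀ : ℕ, ∀ n ≥ n₀, ∃ m : ℕ, 1 ≤ m ∧ m ≤ n - 1 ∧
      exGen n (doubleStar a b) (⊤ : SimpleGraph (Fin 3)) =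
        _root_.copyCount (doubleStar a b) (completeBipartiteGraph (Fin m) (Fin (n - m))) := by
  refine ⟨2, fun n hn => ?_⟩
  obtain ⟨m, hm, hmax⟩ := (Finset.Icc 1 (n - 1)).exists_max_image (bipartiteWeight n a b)
    ⟨1, Finset.mem_Icc.2 ⟨le_rfl, by omega⟩⟩
  obtain ⟨hm1, hm2⟩ := Finset.mem_Icc.1 hm
  set K := completeBipartiteGraph (Fin m) (Fin (n - m))
  have hcard : Fintype.card (Fin m ⊕ Fin (n - m)) = n := by simp; omega
  refine ⟨m, hm1, hm2, IsGreatest.csSup_eq ⟨⟨K.overFin hcard, ?_,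
    copyCount_congr_right _ (K.overFinIso hcard)⟩, ?_⟩⟩
  · rw [contains_iff_isContained, ← isContained_congr_right (K.overFinIso hcard),
      ← contains_iff_isContained, not_contains_triangle_iff]
    exact cliqueFree_three_completeBipartiteGraph _ _
  · rintro _ ⟨G, hG, rfl⟩
    classical
    exact copyCount_doubleStar_le_completeBipartiteGraph ha hb (not_contains_triangle_iff.1 hG)
      (Fintype.card_fin n) hmax
end

section
/- Let c ≤ a ≤ b < d be positive integers. Then there is a constant k = k(a,b,c,d) such that for every positive integer n, ex(n, S_{a,b}, S_{c,d}) ≥ r·n − k. -/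
/-!
Both bounds come from a disjoint union of `⌊n / m⌋` copies of a fixed `m`-vertex graph `K`,
padded with isolated vertices. Since `S_{c,d}` is connected, such a graph is `S_{c,d}`-free as
soon as `K` is: this holds for `K = K_{c+d+1}`, which has fewer vertices than `S_{c,d}`, and for
`K = K_{d,d}`, whose degrees are smaller than the degree `d + 1` of a centre of `S_{c,d}`.

A copy of `S_{a,b}` in a `δ`-regular `K` is chosen by an oriented central edge `uv` and leaf
sets `A ⊆ N(u) \ {v}`, `B ⊆ N(v) \ ({u} ∪ A)` of sizes `a` and `b`. The copy determines these
data up to swapping `u` and `v`, which is possible only if `a = b`. This gives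
`m δ C(δ-1, a) C(δ-1-a, b)` choices in `K_m`, and `m δ C(δ-1, a) C(δ-1, b)` in the
triangle-free `K_{d,d}`, where `A` never meets `N(v)`; divided by `2` if `a = b` and by `m`,
these are the two terms of `r`.
-/

open SimpleGraph

open Finset Function

section Copies

variable {α β V W : Type*} {F : SimpleGraph α} {H : SimpleGraph β} {G : SimpleGraph V}
  {G' : SimpleGraph W}

lemma SimpleGraph.Subgraph.map_injective {f : G →g G'} (hf : Injective f) :
    Injective (Subgraph.map f) := by
  intro S T hST
  ext p q
  · simpa [hf.mem_set_image] using congrArg (f p ∈ ·.verts) hST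
  · simpa [Relation.map_apply_apply hf hf] using congrArg (·.Adj (f p) (f q)) hST

lemma SimpleGraph.Copy.toSubgraph_adj_apply (f : Copy H G) {x : β} {q : V} :
    f.toSubgraph.Adj (f x) q ↔ ∃ y, H.Adj x y ∧ f y = q := by
  simp only [Copy.toSubgraph, Subgraph.map_adj, Relation.Map, Subgraph.top_adj]
  constructor
  · rintro ⟨x', y, hxy, hx, rfl⟩
    obtain rfl := f.injective hx
    exact ⟨y, hxy, rfl⟩
  · rintro ⟨y, hxy, rfl⟩
    exact ⟨x, y, hxy, rfl, rfl⟩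

-- `copyCount` alone would be ambiguous with Mathlib's `SimpleGraph.copyCount`.
lemma copyCount_eq_ncard_range :
    _root_.copyCount H G = (Set.range (Copy.toSubgraph : Copy H G → G.Subgraph)).ncard := by
  rw [Copy.range_toSubgraph, _root_.copyCount]

lemma copyCount_le_of_embedding [Finite W] (f : G ↪g G') :
    _root_.copyCount H G ≤ _root_.copyCount H G' := by
  rw [copyCount_eq_ncard_range, copyCount_eq_ncard_range,
    ← Set.ncard_image_of_injective _ (Subgraph.map_injective (f := f.toHom) f.injective)]
  refine Set.ncard_le_ncard ?_ (Set.toFinite _)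
  rintro _ ⟨_, ⟨c, rfl⟩, rfl⟩
  exact ⟨f.toCopy.comp c, (Subgraph.map_comp ⊤ c.toHom f.toHom).trans rfl⟩

lemma Contains.card_le [Fintype α] [Fintype V] (h : Contains F G) :
    Fintype.card α ≤ Fintype.card V :=
  let ⟨f, hf⟩ := h
  Fintype.card_le_of_injective f hf

lemma Contains.of_map (hF : ∀ x, ∃ y, F.Adj x y) (f : V ↪ W) (h : Contains F (G.map f)) :
    Contains F G := by
  obtain ⟨g, hg⟩ := h
  have hrange : ∀ x, ∃ v, f v = g x := fun x => by
    obtain ⟨y, hxy⟩ := hF x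
    obtain ⟨v, -, -, hv, -⟩ := (map_adj f G _ _).1 (g.map_adj hxy)
    exact ⟨v, hv⟩
  choose g' hg' using hrange
  refine ⟨⟨g', fun {x y} hxy => ?_⟩, fun x y hxy => hg ?_⟩
  · rw [← map_adj_apply (f := f), hg', hg']
    exact g.map_adj hxy
  · simpa [hg'] using congrArg f hxy

lemma le_exGen {n : ℕ} {G : SimpleGraph (Fin n)} (hG : ¬ Contains F G) :
    _root_.copyCount H G ≤ exGen n H F := by
  refine le_csSup ?_ ⟨G, hG, rfl⟩
  refine ((Set.finite_range fun G : SimpleGraph (Fin n) => _root_.copyCount H G).subset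
    ?_).bddAbove
  rintro _ ⟨G, -, rfl⟩
  exact ⟨G, rfl⟩

lemma copyCount_le_exGen_of_card_le [Fintype V] {n : ℕ} (hV : Fintype.card V ≤ n)
    (hF : ∀ x, ∃ y, F.Adj x y) (hG : ¬ Contains F G) :
    _root_.copyCount H G ≤ exGen n H F := by
  obtain ⟨f⟩ : Nonempty (V ↪ Fin n) :=
    Function.Embedding.nonempty_of_card_le (by simpa using hV)
  -- the vertices outside the image of `f` are isolated, so `hF` keeps copies of `F` inside it
  exact (copyCount_le_of_embedding (Embedding.map f G)).trans
    (le_exGen fun h => hG (h.of_map hF f))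

section DisjointCopies

variable {ι : Type*} {K : SimpleGraph W}

lemma Contains.of_boxProd_bot (hF : F.Preconnected)
    (h : Contains F ((⊥ : SimpleGraph ι) □ K)) : Contains F K := by
  obtain ⟨g, hg⟩ := h
  have hlayer : ∀ x y, (g x).1 = (g y).1 := fun x y => by
    simpa using (reachable_boxProd.1 ((hF x y).map g)).1
  refine ⟨⟨fun x => (g x).2, fun hxy => ?_⟩, fun x y hxy => hg (Prod.ext (hlayer x y) hxy)⟩
  exact (by simpa using g.map_adj hxy : _ ∧ _).1

lemma card_mul_copyCount_le_copyCount_boxProd_bot [Nonempty β] [Finite ι] [Finite W] :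
    Nat.card ι * _root_.copyCount H K ≤ _root_.copyCount H ((⊥ : SimpleGraph ι) □ K) := by
  rw [copyCount_eq_ncard_range, copyCount_eq_ncard_range, ← Set.ncard_univ ι, ← Set.ncard_prod]
  let φ : ι × K.Subgraph → ((⊥ : SimpleGraph ι) □ K).Subgraph :=
    fun p => p.2.map (boxProdRight ⊥ K p.1).toHom
  have hφ : Set.InjOn φ (Set.univ ×ˢ Set.range (Copy.toSubgraph (A := H))) := by
    rintro ⟨t, -⟩ ⟨-, c, rfl⟩ ⟨t', S'⟩ - h
    obtain ⟨x⟩ := ‹Nonempty β›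
    obtain ⟨w, -, hw⟩ : (t, c x) ∈ (φ (t', S')).verts :=
      h ▸ ⟨c x, ⟨x, trivial, rfl⟩, rfl⟩
    obtain rfl : t = t' := (congrArg Prod.fst hw).symm
    exact Prod.ext rfl (Subgraph.map_injective (boxProdRight ⊥ K t).injective h)
  rw [← hφ.ncard_image]
  refine Set.ncard_le_ncard ?_ (Set.toFinite _)
  rintro _ ⟨⟨t, _⟩, ⟨-, c, rfl⟩, rfl⟩
  exact ⟨(boxProdRight ⊥ K t).toCopy.comp c, (Subgraph.map_comp ⊤ c.toHom _).trans rfl⟩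

lemma div_mul_copyCount_le_exGen [Fintype W] [Nonempty β] [Nontrivial α] (hF : F.Preconnected)
    (hK : ¬ Contains F K) (n : ℕ) :
    n / Fintype.card W * _root_.copyCount H K ≤ exGen n H F := by
  have hcard : Fintype.card (Fin (n / Fintype.card W) × W) ≤ n := by
    simpa using Nat.div_mul_le_self n (Fintype.card W)
  calc n / Fintype.card W * _root_.copyCount H K
      = Nat.card (Fin (n / Fintype.card W)) * _root_.copyCount H K := by simp
    _ ≤ _root_.copyCount H ((⊥ : SimpleGraph (Fin (n / Fintype.card W))) □ K) :=
      card_mul_copyCount_le_copyCount_boxProd_bot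
    _ ≤ exGen n H F :=
      copyCount_le_exGen_of_card_le hcard hF.exists_adj_of_nontrivial
        fun h => hK (h.of_boxProd_bot hF)

theorem exists_sub_le_exGen [Fintype W] [Nonempty W] [Nonempty β] [Nontrivial α]
    (hF : F.Preconnected) (hK : ¬ Contains F K) {q : ℝ} (hq : 0 ≤ q)
    (hqK : q * Fintype.card W ≤ _root_.copyCount H K) :
    ∃ k : ℝ, ∀ n : ℕ, q * n - k ≤ exGen n H F := by
  set N := Fintype.card W
  refine ⟨q * N, fun n => ?_⟩
  have hn : (n : ℝ) - N ≤ (n / N : ℕ) * N := by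
    have := Nat.lt_div_mul_add (a := n) (Fintype.card_pos (α := W))
    have : (n : ℝ) < (n / N : ℕ) * N + N := by exact_mod_cast this
    linarith
  calc q * n - q * N = q * (n - N) := by ring
    _ ≤ q * ((n / N : ℕ) * N) := mul_le_mul_of_nonneg_left hn hq
    _ = (n / N : ℕ) * (q * N) := by ring
    _ ≤ (n / N : ℕ) * _root_.copyCount H K := by gcongr
    _ ≤ exGen n H F := by exact_mod_cast div_mul_copyCount_le_exGen (H := H) hF hK n

end DisjointCopies

end Copies

lemma doubleStar_adj {a b : ℕ} {x y : Fin (a + b + 2)} :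
    (doubleStar a b).Adj x y ↔
      (x.val = 0 ∧ y.val = 1) ∨ (y.val = 0 ∧ x.val = 1) ∨
        (x.val = 0 ∧ 2 ≤ y.val ∧ y.val < a + 2) ∨
        (y.val = 0 ∧ 2 ≤ x.val ∧ x.val < a + 2) ∨
        (x.val = 1 ∧ a + 2 ≤ y.val) ∨ (y.val = 1 ∧ a + 2 ≤ x.val) := by
  rw [doubleStar, fromRel_adj, ← Fin.val_ne_iff]
  constructor
  · rintro ⟨-, h | h⟩ <;> tauto
  · intro h
    exact ⟨by omega, by tauto⟩

namespace doubleStar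

variable {a b : ℕ}

def leafLeft (i : Fin a) : Fin (a + b + 2) := (Fin.castAdd b i).succ.succ

def leafRight (j : Fin b) : Fin (a + b + 2) := (Fin.natAdd a j).succ.succ

@[simp] lemma val_leafLeft (i : Fin a) : (leafLeft (b := b) i).val = i + 2 := rfl

@[simp] lemma val_leafRight (j : Fin b) : (leafRight (a := a) j).val = a + j + 2 := rfl

lemma mem_range_leafLeft {x : Fin (a + b + 2)} :
    x ∈ Set.range leafLeft ↔ 2 ≤ x.val ∧ x.val < a + 2 := by
  refine ⟨?_, fun h =>
    ⟨⟨x - 2, by omega⟩, Fin.ext (by rw [val_leafLeft, Fin.val_mk]; omega)⟩⟩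
  rintro ⟨i, rfl⟩
  simp

lemma mem_range_leafRight {x : Fin (a + b + 2)} :
    x ∈ Set.range leafRight ↔ a + 2 ≤ x.val := by
  refine ⟨?_, fun h =>
    ⟨⟨x - (a + 2), by omega⟩, Fin.ext (by rw [val_leafRight, Fin.val_mk]; omega)⟩⟩
  rintro ⟨j, rfl⟩
  simp

lemma eq_zero_or_eq_one_or_two_le (x : Fin (a + b + 2)) : x = 0 ∨ x = 1 ∨ 2 ≤ x.val := by
  simp only [Fin.ext_iff, Fin.val_zero, Fin.val_one]
  omega

lemma adj_zero {y : Fin (a + b + 2)} :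
    (doubleStar a b).Adj 0 y ↔ y = 1 ∨ y ∈ Set.range leafLeft := by
  rw [doubleStar_adj, mem_range_leafLeft, Fin.ext_iff]
  simp only [Fin.val_zero, Fin.val_one, true_and]
  omega

lemma adj_one {y : Fin (a + b + 2)} :
    (doubleStar a b).Adj 1 y ↔ y = 0 ∨ y ∈ Set.range leafRight := by
  rw [doubleStar_adj, mem_range_leafRight, Fin.ext_iff]
  simp only [Fin.val_zero, Fin.val_one, true_and, and_true]
  omega

lemma eq_zero_or_eq_one_of_adj {x y : Fin (a + b + 2)} (hx : 2 ≤ x.val)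
    (h : (doubleStar a b).Adj x y) : y = 0 ∨ y = 1 := by
  rw [doubleStar_adj] at h
  simp only [Fin.ext_iff, Fin.val_zero, Fin.val_one]
  omega

lemma eq_of_adj_of_adj {x y z : Fin (a + b + 2)} (hx : 2 ≤ x.val)
    (hy : (doubleStar a b).Adj x y) (hz : (doubleStar a b).Adj x z) : y = z := by
  rw [doubleStar_adj] at hy hz
  ext
  omega

lemma preconnected : (doubleStar a b).Preconnected := by
  have h01 : (doubleStar a b).Adj 0 1 := adj_zero.2 (.inl rfl)
  have h0 : ∀ x, (doubleStar a b).Reachable 0 x := fun x => by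
    obtain rfl | rfl | hx := eq_zero_or_eq_one_or_two_le x
    · rfl
    · exact h01.reachable
    · by_cases hxa : x.val < a + 2
      · exact (adj_zero.2 (.inr (mem_range_leafLeft.2 ⟨hx, hxa⟩))).reachable
      · exact h01.reachable.trans
          (adj_one.2 (.inr (mem_range_leafRight.2 (by omega)))).reachable
  exact fun x y => (h0 x).symm.trans (h0 y)

lemma degree_one [Fintype ((doubleStar a b).neighborSet 1)] :
    (doubleStar a b).degree 1 = b + 1 := by
  have hinj : Injective (Fin.cons 0 leafRight : Fin (b + 1) → Fin (a + b + 2)) :=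
    Fin.cons_injective_iff.2 ⟨fun h => by simpa using mem_range_leafRight.1 h,
      fun i j h => by simpa [Fin.ext_iff] using h⟩
  have hN : (doubleStar a b).neighborSet 1 =
      Set.range (Fin.cons 0 leafRight : Fin (b + 1) → _) := by
    ext y
    simp [adj_one]
  rw [← card_neighborSet_eq_degree, Fintype.card_congr (Equiv.setCongr hN),
    Set.card_range_of_injective hinj, Fintype.card_fin]

end doubleStar

lemma not_contains_doubleStar_of_degree_le {a b : ℕ} {V : Type*} [Fintype V]
    {G : SimpleGraph V} [DecidableRel G.Adj] (h : ∀ v, G.degree v ≤ b) :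
    ¬ Contains (doubleStar a b) G := by
  classical
  rintro ⟨f, hf⟩
  have := (⟨f, hf⟩ : Copy (doubleStar a b) G).degree_le 1
  rw [doubleStar.degree_one] at this
  exact absurd (this.trans (h _)) (by omega)

lemma Fin.range_append {γ : Type*} {m n : ℕ} (xs : Fin m → γ) (ys : Fin n → γ) :
    Set.range (Fin.append xs ys) = Set.range xs ∪ Set.range ys := by
  ext z
  constructor
  · rintro ⟨k, rfl⟩
    induction k using Fin.addCases <;> simp
  · rintro (⟨i, rfl⟩ | ⟨j, rfl⟩)
    exacts [⟨Fin.castAdd n i, by simp⟩, ⟨Fin.natAdd m j, by simp⟩]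

lemma Finset.range_equivFinOfCardEq_symm {V : Type*} {s : Finset V} {n : ℕ} (hs : #s = n) :
    Set.range (fun i => ((s.equivFinOfCardEq hs).symm i : V)) = s := by
  ext x
  rw [Set.mem_range,
    ← (s.equivFinOfCardEq hs).symm.surjective.exists (p := fun y : s => (y : V) = x)]
  simp

section DoubleStarCopy

variable {V : Type*} {G : SimpleGraph V} {a b : ℕ}

def doubleStarMap (u v : V) (eA : Fin a → V) (eB : Fin b → V) : Fin (a + b + 2) → V :=
  Fin.cons u (Fin.cons v (Fin.append eA eB))

section

variable {u v : V} {eA : Fin a → V} {eB : Fin b → V}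

@[simp] lemma doubleStarMap_zero : doubleStarMap u v eA eB 0 = u := rfl

@[simp] lemma doubleStarMap_one : doubleStarMap u v eA eB 1 = v := rfl

@[simp] lemma doubleStarMap_leafLeft (i : Fin a) :
    doubleStarMap u v eA eB (doubleStar.leafLeft i) = eA i := by
  simp [doubleStarMap, doubleStar.leafLeft]

@[simp] lemma doubleStarMap_leafRight (j : Fin b) :
    doubleStarMap u v eA eB (doubleStar.leafRight j) = eB j := by
  simp [doubleStarMap, doubleStar.leafRight]

end

structure IsDoubleStarData (G : SimpleGraph V) (a b : ℕ) (u v : V) (A B : Finset V) : Prop where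
  adj : G.Adj u v
  card_left : #A = a
  card_right : #B = b
  left : ∀ x ∈ A, G.Adj u x ∧ x ≠ v
  right : ∀ y ∈ B, G.Adj v y ∧ y ≠ u ∧ y ∉ A

namespace IsDoubleStarData

variable {u v : V} {A B : Finset V}

noncomputable def map (h : IsDoubleStarData G a b u v A B) : Fin (a + b + 2) → V :=
  doubleStarMap u v (fun i => (A.equivFinOfCardEq h.card_left).symm i)
    (fun j => (B.equivFinOfCardEq h.card_right).symm j)

lemma map_injective (h : IsDoubleStarData G a b u v A B) : Injective h.map := by
  have hA : ∀ x ∈ A, x ≠ u ∧ x ≠ v := fun x hx =>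
    ⟨(h.left x hx).1.ne', (h.left x hx).2⟩
  have hB : ∀ y ∈ B, y ≠ v ∧ y ≠ u ∧ y ∉ A := fun y hy =>
    ⟨(h.right y hy).1.ne', (h.right y hy).2⟩
  simp only [map, doubleStarMap, Fin.cons_injective_iff, Fin.range_cons, Fin.range_append,
    Fin.append_injective_iff, Finset.range_equivFinOfCardEq_symm]
  refine ⟨?_, ?_, Subtype.val_injective.comp (Equiv.injective _),
    Subtype.val_injective.comp (Equiv.injective _), fun i j hij => ?_⟩
  · simp only [Set.mem_insert_iff, Set.mem_union, Finset.mem_coe, not_or]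
    exact ⟨h.adj.ne, fun hu => (hA u hu).1 rfl, fun hu => (hB u hu).2.1 rfl⟩
  · simp only [Set.mem_union, Finset.mem_coe, not_or]
    exact ⟨fun hv => (hA v hv).2 rfl, fun hv => (hB v hv).1 rfl⟩
  · exact (hB _ (Subtype.mem _)).2.2 (hij ▸ Subtype.mem _)

lemma map_adj (h : IsDoubleStarData G a b u v A B) {x y : Fin (a + b + 2)}
    (hxy : (doubleStar a b).Adj x y) : G.Adj (h.map x) (h.map y) := by
  have hcentre : ∀ {x y}, (x = 0 ∨ x = 1) → (doubleStar a b).Adj x y →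
      G.Adj (h.map x) (h.map y) := by
    rintro x y (rfl | rfl) hxy
    · obtain rfl | ⟨i, rfl⟩ := doubleStar.adj_zero.1 hxy
      · exact h.adj
      · simpa [map] using (h.left _ (Subtype.mem _)).1
    · obtain rfl | ⟨j, rfl⟩ := doubleStar.adj_one.1 hxy
      · exact h.adj.symm
      · simpa [map] using (h.right _ (Subtype.mem _)).1
  obtain hx | hx | hx := doubleStar.eq_zero_or_eq_one_or_two_le x
  · exact hcentre (.inl hx) hxy
  · exact hcentre (.inr hx) hxy
  · exact (hcentre (doubleStar.eq_zero_or_eq_one_of_adj hx hxy) hxy.symm).symm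

noncomputable def copy (h : IsDoubleStarData G a b u v A B) : Copy (doubleStar a b) G :=
  ⟨⟨h.map, h.map_adj⟩, h.map_injective⟩

lemma toSubgraph_adj_left (h : IsDoubleStarData G a b u v A B) {q : V} :
    h.copy.toSubgraph.Adj u q ↔ q = v ∨ q ∈ A := by
  refine (h.copy.toSubgraph_adj_apply (x := 0)).trans ?_
  simp only [doubleStar.adj_zero, or_and_right, exists_or, exists_eq_left, Set.mem_range,
    exists_exists_eq_and]
  simp [copy, map, ← Finset.mem_coe, ← Finset.range_equivFinOfCardEq_symm h.card_left, eq_comm]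

lemma toSubgraph_adj_right (h : IsDoubleStarData G a b u v A B) {q : V} :
    h.copy.toSubgraph.Adj v q ↔ q = u ∨ q ∈ B := by
  refine (h.copy.toSubgraph_adj_apply (x := 1)).trans ?_
  simp only [doubleStar.adj_one, or_and_right, exists_or, exists_eq_left, Set.mem_range,
    exists_exists_eq_and]
  simp [copy, map, ← Finset.mem_coe, ← Finset.range_equivFinOfCardEq_symm h.card_right, eq_comm]

lemma eq_or_eq_of_adj_of_adj (h : IsDoubleStarData G a b u v A B) {p q r : V}
    (hq : h.copy.toSubgraph.Adj p q) (hr : h.copy.toSubgraph.Adj p r) (hqr : q ≠ r) :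
    p = u ∨ p = v := by
  obtain ⟨x, y, hxy, rfl, rfl⟩ := hq
  obtain ⟨x', z, hxz, hx', rfl⟩ := hr
  obtain rfl := (h.copy.injective hx').symm
  obtain rfl | rfl | hx := doubleStar.eq_zero_or_eq_one_or_two_le x
  · exact .inl rfl
  · exact .inr rfl
  · exact absurd (congrArg _ (doubleStar.eq_of_adj_of_adj hx hxy hxz)) hqr

lemma mem_left_iff (h : IsDoubleStarData G a b u v A B) {x : V} :
    x ∈ A ↔ h.copy.toSubgraph.Adj u x ∧ x ≠ v := by
  rw [h.toSubgraph_adj_left]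
  exact ⟨fun hx => ⟨.inr hx, (h.left x hx).2⟩, fun ⟨hx, hxv⟩ => hx.resolve_left hxv⟩

lemma mem_right_iff (h : IsDoubleStarData G a b u v A B) {y : V} :
    y ∈ B ↔ h.copy.toSubgraph.Adj v y ∧ y ≠ u := by
  rw [h.toSubgraph_adj_right]
  exact ⟨fun hy => ⟨.inr hy, (h.right y hy).2.1⟩, fun ⟨hy, hyu⟩ => hy.resolve_left hyu⟩

lemma eq_or_eq_swap_of_toSubgraph_eq {u' v' : V} {A' B' : Finset V}
    (h : IsDoubleStarData G a b u v A B) (h' : IsDoubleStarData G a b u' v' A' B')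
    (ha : 0 < a) (hb : 0 < b) (hS : h.copy.toSubgraph = h'.copy.toSubgraph) :
    (u' = u ∧ v' = v ∧ A' = A ∧ B' = B) ∨ (u' = v ∧ v' = u ∧ A' = B ∧ B' = A) := by
  obtain ⟨x, hx⟩ : A'.Nonempty := Finset.card_pos.1 (h'.card_left ▸ ha)
  obtain ⟨y, hy⟩ : B'.Nonempty := Finset.card_pos.1 (h'.card_right ▸ hb)
  -- as `a, b > 0`, the centres are the only vertices with two distinct neighbours
  have hu' : u' = u ∨ u' = v := h.eq_or_eq_of_adj_of_adj
    (hS ▸ h'.toSubgraph_adj_left.2 (.inl rfl)) (hS ▸ h'.toSubgraph_adj_left.2 (.inr hx))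
    (h'.left x hx).2.symm
  have hv' : v' = u ∨ v' = v := h.eq_or_eq_of_adj_of_adj
    (hS ▸ h'.toSubgraph_adj_right.2 (.inl rfl)) (hS ▸ h'.toSubgraph_adj_right.2 (.inr hy))
    (h'.right y hy).2.1.symm
  rcases hu' with rfl | rfl <;> rcases hv' with rfl | rfl
  · exact (h'.adj.ne rfl).elim
  · refine .inl ⟨rfl, rfl, ?_, ?_⟩ <;> ext z
    · rw [h'.mem_left_iff, ← hS, h.mem_left_iff]
    · rw [h'.mem_right_iff, ← hS, h.mem_right_iff]
  · refine .inr ⟨rfl, rfl, ?_, ?_⟩ <;> ext z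
    · rw [h'.mem_left_iff, ← hS, h.mem_right_iff]
    · rw [h'.mem_right_iff, ← hS, h.mem_left_iff]
  · exact (h'.adj.ne rfl).elim

end IsDoubleStarData

end DoubleStarCopy

section Darts

variable {V : Type*} [Fintype V] {G : SimpleGraph V} [DecidableRel G.Adj]

lemma SimpleGraph.exists_orientation :
    ∃ P : Finset G.Dart, (∀ e ∈ P, e.symm ∉ P) ∧ 2 * #P = Fintype.card G.Dart := by
  classical
  let : LinearOrder V := LinearOrder.lift' _ (Fintype.equivFin V).injective
  refine ⟨({e | e.fst < e.snd} : Finset G.Dart), fun e he hs => ?_, ?_⟩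
  · simp only [Finset.mem_filter, Finset.mem_univ, true_and, Dart.symm_toProd, Prod.fst_swap,
      Prod.snd_swap] at he hs
    exact lt_asymm he hs
  · have hswap : #({e | ¬ e.fst < e.snd} : Finset G.Dart) =
        #({e | e.fst < e.snd} : Finset G.Dart) := by
      refine Finset.card_nbij' Dart.symm Dart.symm ?_ ?_ (fun e _ => Dart.symm_involutive e)
        (fun e _ => Dart.symm_involutive e)
      · intro e he
        simp only [Finset.mem_coe, Finset.mem_filter, Finset.mem_univ, true_and, not_lt,
          Dart.symm_toProd, Prod.fst_swap, Prod.snd_swap] at he ⊢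
        exact lt_of_le_of_ne he e.snd_ne_fst
      · intro e he
        simp only [Finset.mem_coe, Finset.mem_filter, Finset.mem_univ, true_and, not_lt,
          Dart.symm_toProd, Prod.fst_swap, Prod.snd_swap] at he ⊢
        exact he.le
    rw [two_mul, ← Finset.card_univ, ← Finset.card_filter_add_card_filter_not (s := univ)
      (p := fun e : G.Dart => e.fst < e.snd), hswap]

lemma SimpleGraph.IsRegularOfDegree.card_dart {δ : ℕ} (hG : G.IsRegularOfDegree δ) :
    Fintype.card G.Dart = Fintype.card V * δ := by
  simp [dart_card_eq_sum_degrees, hG.degree_eq]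

end Darts

section Counting

variable {V : Type*} [Fintype V] [DecidableEq V] {G : SimpleGraph V} [DecidableRel G.Adj]
  {a b : ℕ}

def doubleStarData (a b : ℕ) (P : Finset G.Dart) :
    Finset (Σ _ : G.Dart, Σ _ : Finset V, Finset V) :=
  P.sigma fun e => ((G.neighborFinset e.fst).erase e.snd).powersetCard a |>.sigma
    fun A => (G.neighborFinset e.snd \ insert e.fst A).powersetCard b

lemma isDoubleStarData_of_mem_doubleStarData {P : Finset G.Dart} {e : G.Dart} {A B : Finset V}
    (h : ⟨e, A, B⟩ ∈ doubleStarData a b P) : IsDoubleStarData G a b e.fst e.snd A B := by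
  simp only [doubleStarData, Finset.mem_sigma, Finset.mem_powersetCard] at h
  obtain ⟨-, ⟨hA, hAcard⟩, hB, hBcard⟩ := h
  refine ⟨e.adj, hAcard, hBcard, fun x hx => ?_, fun y hy => ?_⟩
  · simpa [and_comm] using hA hx
  · simpa [not_or, and_comm, and_assoc] using hB hy

lemma card_mul_choose_mul_choose_le_card_doubleStarData {P : Finset G.Dart} {α β : ℕ}
    (hα : ∀ e ∈ P, α ≤ #((G.neighborFinset e.fst).erase e.snd))
    (hβ : ∀ e ∈ P, ∀ A ⊆ (G.neighborFinset e.fst).erase e.snd, #A = a →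
      β ≤ #(G.neighborFinset e.snd \ insert e.fst A)) :
    #P * (α.choose a * β.choose b) ≤ #(doubleStarData a b P) := by
  rw [doubleStarData, Finset.card_sigma, ← smul_eq_mul, ← Finset.sum_const]
  refine Finset.sum_le_sum fun e he => ?_
  rw [Finset.card_sigma]
  calc α.choose a * β.choose b
      ≤ #(((G.neighborFinset e.fst).erase e.snd).powersetCard a) * β.choose b := by
        rw [Finset.card_powersetCard]
        exact Nat.mul_le_mul_right _ (Nat.choose_le_choose _ (hα e he))
    _ ≤ _ := by
        rw [← smul_eq_mul, ← Finset.sum_const]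
        refine Finset.sum_le_sum fun A hA => ?_
        rw [Finset.card_powersetCard]
        exact Nat.choose_le_choose _ (hβ e he A (Finset.mem_powersetCard.1 hA).1
          (Finset.mem_powersetCard.1 hA).2)

lemma card_doubleStarData_le_copyCount (ha : 0 < a) (hb : 0 < b) {P : Finset G.Dart}
    (hP : a = b → ∀ e ∈ P, e.symm ∉ P) :
    #(doubleStarData a b P) ≤ _root_.copyCount (doubleStar a b) G := by
  classical
  let Φ : (Σ _ : G.Dart, Σ _ : Finset V, Finset V) → G.Subgraph := fun q =>
    if h : IsDoubleStarData G a b q.1.fst q.1.snd q.2.1 q.2.2 then h.copy.toSubgraph else ⊥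
  rw [copyCount_eq_ncard_range, ← Set.ncard_coe_finset]
  refine Set.ncard_le_ncard_of_injOn Φ ?_ ?_
  · rintro ⟨e, A, B⟩ hq
    have h := isDoubleStarData_of_mem_doubleStarData hq
    exact ⟨h.copy, by simp only [Φ, dif_pos h]⟩
  · rintro ⟨e, A, B⟩ hq ⟨e', A', B'⟩ hq' hΦ
    have h := isDoubleStarData_of_mem_doubleStarData hq
    have h' := isDoubleStarData_of_mem_doubleStarData hq'
    simp only [Φ, dif_pos h, dif_pos h'] at hΦ
    obtain ⟨hu, hv, rfl, rfl⟩ | ⟨hu, hv, rfl, rfl⟩ :=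
      h.eq_or_eq_swap_of_toSubgraph_eq h' ha hb hΦ
    · obtain rfl : e' = e := Dart.ext _ _ (Prod.ext hu hv)
      rfl
    · have hab : a = b := h'.card_left.symm.trans h.card_right
      obtain rfl : e' = e.symm := Dart.ext _ _ (Prod.ext hu hv)
      exact absurd (Finset.mem_sigma.1 hq').1 (hP hab e (Finset.mem_sigma.1 hq).1)

theorem card_dart_mul_le_copyCount_doubleStar (ha : 0 < a) (hb : 0 < b) {α β : ℕ}
    (hα : ∀ e : G.Dart, α ≤ #((G.neighborFinset e.fst).erase e.snd))
    (hβ : ∀ e : G.Dart, ∀ A ⊆ (G.neighborFinset e.fst).erase e.snd, #A = a →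
      β ≤ #(G.neighborFinset e.snd \ insert e.fst A)) :
    Fintype.card G.Dart * (α.choose a * β.choose b) ≤
      (if a = b then 2 else 1) * _root_.copyCount (doubleStar a b) G := by
  split_ifs with hab
  -- for `a = b`, the two orientations of a central edge yield the same copies
  · obtain ⟨P, hPsymm, hPcard⟩ := G.exists_orientation
    rw [← hPcard, mul_assoc]
    exact Nat.mul_le_mul_left 2 ((card_mul_choose_mul_choose_le_card_doubleStarData
      (fun e _ => hα e) (fun e _ => hβ e)).trans
      (card_doubleStarData_le_copyCount ha hb fun _ => hPsymm))
  · rw [one_mul, ← Finset.card_univ]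
    exact (card_mul_choose_mul_choose_le_card_doubleStarData (fun e _ => hα e)
      (fun e _ => hβ e)).trans (card_doubleStarData_le_copyCount ha hb fun h => absurd h hab)

lemma SimpleGraph.IsRegularOfDegree.card_neighborFinset_erase {δ : ℕ}
    (hG : G.IsRegularOfDegree δ) (e : G.Dart) :
    #((G.neighborFinset e.fst).erase e.snd) = δ - 1 := by
  rw [Finset.card_erase_of_mem ((G.mem_neighborFinset _ _).2 e.adj),
    card_neighborFinset_eq_degree, hG.degree_eq]

theorem SimpleGraph.IsRegularOfDegree.card_mul_le_copyCount_doubleStar (ha : 0 < a) (hb : 0 < b)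
    {δ : ℕ} (hG : G.IsRegularOfDegree δ) :
    Fintype.card V * δ * ((δ - 1).choose a * (δ - 1 - a).choose b) ≤
      (if a = b then 2 else 1) * _root_.copyCount (doubleStar a b) G := by
  rw [← hG.card_dart]
  refine card_dart_mul_le_copyCount_doubleStar ha hb
    (fun e => (hG.card_neighborFinset_erase e).ge) fun e A _ _ => ?_
  calc δ - 1 - a ≤ #(G.neighborFinset e.snd) - #(insert e.fst A) := by
        rw [card_neighborFinset_eq_degree, hG.degree_eq]
        have := Finset.card_insert_le e.fst A
        omega
    _ ≤ _ := Finset.le_card_sdiff _ _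

theorem SimpleGraph.IsRegularOfDegree.card_mul_le_copyCount_doubleStar_of_cliqueFree (ha : 0 < a)
    (hb : 0 < b) {δ : ℕ} (hG : G.IsRegularOfDegree δ) (hG3 : G.CliqueFree 3) :
    Fintype.card V * δ * ((δ - 1).choose a * (δ - 1).choose b) ≤
      (if a = b then 2 else 1) * _root_.copyCount (doubleStar a b) G := by
  rw [← hG.card_dart]
  refine card_dart_mul_le_copyCount_doubleStar ha hb
    (fun e => (hG.card_neighborFinset_erase e).ge) fun e A hA _ => ?_
  rw [← hG.card_neighborFinset_erase e.symm]
  refine Finset.card_le_card fun z hz => ?_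
  replace hz : z ≠ e.fst ∧ G.Adj e.snd z := by simpa using hz
  refine Finset.mem_sdiff.2 ⟨(G.mem_neighborFinset _ _).2 hz.2, ?_⟩
  intro hz'
  obtain rfl | hzA := Finset.mem_insert.1 hz'
  · exact hz.1 rfl
  · have hxz := (G.mem_neighborFinset _ _).1 (Finset.mem_erase.1 (hA hzA)).2
    exact hG3 {e.fst, e.snd, z} (is3Clique_triple_iff.2 ⟨e.adj, hxz, hz.2⟩)

end Counting

lemma completeBipartiteGraph_isRegularOfDegree {V : Type*} [Fintype V]
    [DecidableRel (completeBipartiteGraph V V).Adj] :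
    (completeBipartiteGraph V V).IsRegularOfDegree (Fintype.card V) := by
  have hr : ({x | x.isRight} : Finset (V ⊕ V)) = univ.map .inr := by ext (x | x) <;> simp
  have hl : ({x | x.isLeft} : Finset (V ⊕ V)) = univ.map .inl := by ext (x | x) <;> simp
  rintro (v | v) <;> simp [degree, neighborFinset_eq_filter, hr, hl]

lemma completeBipartiteGraph_cliqueFree_three (V W : Type*) :
    (completeBipartiteGraph V W).CliqueFree 3 :=
  (CompleteBipartiteGraph.bicoloring V W).colorable.cliqueFree (by simp)

section Constructions

variable {a b : ℕ}

theorem exists_sub_le_exGen_of_top (ha : 0 < a) (hb : 0 < b) (c d : ℕ) :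
    ∃ k : ℝ, ∀ n : ℕ, ((c + d : ℝ) * (c + d - 1).choose a * (c + d - 1 - a).choose b /
      (if a = b then 2 else 1)) * n - k ≤ exGen n (doubleStar a b) (doubleStar c d) := by
  have hK := (IsRegularOfDegree.top (V := Fin (c + d + 1))).card_mul_le_copyCount_doubleStar ha hb
  simp only [Fintype.card_fin, add_tsub_cancel_right] at hK
  refine exists_sub_le_exGen (K := (⊤ : SimpleGraph (Fin (c + d + 1)))) doubleStar.preconnected
    (fun h => by simpa using h.card_le) (by positivity) ?_
  rw [div_mul_eq_mul_div, div_le_iff₀ (by positivity)]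
  have : ((c + d + 1) * (c + d) * ((c + d - 1).choose a * (c + d - 1 - a).choose b) : ℝ) ≤
      (if a = b then 2 else 1) *
        _root_.copyCount (doubleStar a b) (⊤ : SimpleGraph (Fin (c + d + 1))) := by
    exact_mod_cast hK
  simp only [Fintype.card_fin]
  push_cast
  linarith

theorem exists_sub_le_exGen_of_completeBipartiteGraph (ha : 0 < a) (hb : 0 < b) (c : ℕ) {d : ℕ}
    (hd : 0 < d) :
    ∃ k : ℝ, ∀ n : ℕ, ((d : ℝ) * (d - 1).choose a * (d - 1).choose b /
      (if a = b then 2 else 1)) * n - k ≤ exGen n (doubleStar a b) (doubleStar c d) := by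
  classical
  have : Nonempty (Fin d ⊕ Fin d) := ⟨.inl ⟨0, hd⟩⟩
  have hreg : (completeBipartiteGraph (Fin d) (Fin d)).IsRegularOfDegree d := by
    simpa using completeBipartiteGraph_isRegularOfDegree (V := Fin d)
  have hK := hreg.card_mul_le_copyCount_doubleStar_of_cliqueFree ha hb
    (completeBipartiteGraph_cliqueFree_three _ _)
  refine exists_sub_le_exGen (K := completeBipartiteGraph (Fin d) (Fin d)) doubleStar.preconnected
    (not_contains_doubleStar_of_degree_le fun v => (hreg v).le) (by positivity) ?_
  rw [div_mul_eq_mul_div, div_le_iff₀ (by positivity)]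
  simp only [Fintype.card_sum, Fintype.card_fin] at hK ⊢
  have : ((d + d) * d * ((d - 1).choose a * (d - 1).choose b) : ℝ) ≤
      (if a = b then 2 else 1) *
        _root_.copyCount (doubleStar a b) (completeBipartiteGraph (Fin d) (Fin d)) := by
    exact_mod_cast hK
  push_cast
  linarith

end Constructions

/-- for `c ≤ a ≤ b < d`, there is `k` with `ex(n, S_{a,b}, S_{c,d}) ≥ r·n - k`. -/
theorem exGen_doubleStar_doubleStar_lower (a b c d : ℕ) (hc : 0 < c)
    (hca : c ≤ a) (hab : a ≤ b) (hbd : b < d) (r : ℝ)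
    (hr : r = if a = b
      then max ((((c : ℝ) + d) / 2) * ((c + d - 1).choose a) * ((c + d - 1 - a).choose b))
               (((d : ℝ) / 2) * ((d - 1).choose a) * ((d - 1).choose b))
      else max (((c : ℝ) + d) * ((c + d - 1).choose a) * ((c + d - 1 - a).choose b))
               ((d : ℝ) * ((d - 1).choose a) * ((d - 1).choose b))) :
    ∃ k : ℝ, ∀ n : ℕ, 0 < n →
      r * n - k ≤ (exGen n (doubleStar a b) (doubleStar c d) : ℝ) := by
  have ha : 0 < a := hc.trans_le hca
  have hb : 0 < b := ha.trans_le hab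
  obtain ⟨k₁, hk₁⟩ := exists_sub_le_exGen_of_top ha hb c d
  obtain ⟨k₂, hk₂⟩ := exists_sub_le_exGen_of_completeBipartiteGraph ha hb c (hb.trans hbd)
  have hr' : r = max
      ((c + d : ℝ) * (c + d - 1).choose a * (c + d - 1 - a).choose b / (if a = b then 2 else 1))
      ((d : ℝ) * (d - 1).choose a * (d - 1).choose b / (if a = b then 2 else 1)) := by
    rw [hr]
    split_ifs <;> ring_nf
  refine ⟨max k₁ k₂, fun n _ => ?_⟩
  rw [hr', max_mul_of_nonneg _ _ n.cast_nonneg, sub_le_iff_le_add]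
  exact max_le (by linarith [hk₁ n, le_max_left k₁ k₂])
    (by linarith [hk₂ n, le_max_right k₁ k₂])
end

section
/- Let t be a positive integer and 0 < β < 1. There exists n₀ such that for every n ≥ n₀ the following holds: if G is a B_t-free graph on n vertices whose maximum degree Δ satisfies n/2 < Δ < βn, then G has at most Δ(n−Δ) edges. -/
/-!
Let `v` be a vertex of maximum degree `Δ`, `A = N(v)` and `B = V \ A`, so `|B| = n - Δ`.
Since `G` is `B_t`-free, the endpoints of an edge have fewer than `t` common neighbours; in
particular every vertex of `A` has fewer than `t` neighbours in `A`. The degrees in `B` sum to at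
most `(n - Δ) Δ`. For the degrees in `A`, delete the two endpoints of an edge inside `A`: they
account for at most `4t` of the degree sum inside `A` and at most `|B| + t` towards `B`, which is
at most `2|B|` as soon as `|B| ≥ 5t`; once `A` has no edge left, each vertex has at most `|B|`
neighbours. So the degrees in `A` sum to at most `Δ (n - Δ)` too, and `2 e(G) ≤ 2 Δ (n - Δ)`.
The condition `Δ < βn` gives `|B| ≥ 5t` for large `n`.
-/

open SimpleGraph

/-- The book `B_t`: `t` triangles sharing a common edge; the common edge is `0-1` and
vertices `2,…,t+1` are the pages. -/
def book (t : ℕ) : SimpleGraph (Fin (t + 2)) :=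
  SimpleGraph.fromRel (fun x y => x.val < 2 ∧ x ≠ y)

open Finset

section Book

variable {V : Type*} [DecidableEq V] {G : SimpleGraph V} [DecidableRel G.Adj] {t : ℕ}

lemma book_adj_iff {a b : Fin (t + 2)} :
    (book t).Adj a b ↔ a ≠ b ∧ ((a : ℕ) < 2 ∨ (b : ℕ) < 2) := by
  simp only [book, fromRel_adj]
  grind

theorem contains_book_of_le_card_inter_neighborFinset [Fintype V] {x y : V} (hxy : G.Adj x y)
    (ht : t ≤ #(G.neighborFinset x ∩ G.neighborFinset y)) : Contains (book t) G := by
  obtain ⟨s, hs, rfl⟩ := exists_subset_card_eq ht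
  have hpage : ∀ i, G.Adj x (s.equivFin.symm i) ∧ G.Adj y (s.equivFin.symm i) := fun i => by
    simpa using hs (s.equivFin.symm i).2
  let f : Fin (#s + 2) → V := Fin.cons x (Fin.cons y fun i => (s.equivFin.symm i : V))
  refine ⟨⟨f, fun {a b} hab => ?_⟩, ?_⟩
  · rw [book_adj_iff] at hab
    cases a using Fin.cases with
    | zero => cases b using Fin.cases with
      | zero => simp at hab
      | succ b => cases b using Fin.cases with
        | zero => simpa [f] using hxy
        | succ j => simpa [f] using (hpage j).1
    | succ a => cases a using Fin.cases with
      | zero => cases b using Fin.cases with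
        | zero => simpa [f] using hxy.symm
        | succ b => cases b using Fin.cases with
          | zero => simp at hab
          | succ j => simpa [f] using (hpage j).2
      | succ i => cases b using Fin.cases with
        | zero => simpa [f] using (hpage i).1.symm
        | succ b => cases b using Fin.cases with
          | zero => simpa [f] using (hpage i).2.symm
          | succ j => simp at hab
  · refine Fin.cons_injective_iff.2 ⟨?_, Fin.cons_injective_iff.2 ⟨?_, ?_⟩⟩
    · rintro ⟨i, hi⟩
      cases i using Fin.cases with
      | zero => exact hxy.ne (by simpa using hi.symm)
      | succ j => exact (hpage j).1.ne (by simpa using hi.symm)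
    · rintro ⟨i, hi⟩
      exact (hpage i).2.ne hi.symm
    · exact Subtype.val_injective.comp s.equivFin.symm.injective

end Book

lemma card_inter_add_card_inter_le {α : Type*} [DecidableEq α] (X Y B : Finset α) :
    #(X ∩ B) + #(Y ∩ B) ≤ #B + #(X ∩ Y) := by
  rw [← card_union_add_card_inter]
  exact add_le_add (card_le_card (union_subset inter_subset_right inter_subset_right))
    (card_le_card (inter_subset_inter inter_subset_left inter_subset_left))

section Counting

variable {V : Type*} [DecidableEq V] {G : SimpleGraph V} [DecidableRel G.Adj] [Fintype V]

lemma sum_card_neighborFinset_inter_comm (P Q : Finset V) :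
    ∑ a ∈ P, #(G.neighborFinset a ∩ Q) = ∑ b ∈ Q, #(G.neighborFinset b ∩ P) := by
  have h (a : V) (W : Finset V) : #(G.neighborFinset a ∩ W) = ∑ b ∈ W, if G.Adj a b then 1 else 0 := by
    rw [← card_filter]
    congr 1
    ext
    simp [and_comm]
  simp only [h]
  rw [sum_comm]
  simp only [G.adj_comm]

theorem sum_card_neighborFinset_inter_le_card_mul {s : ℕ}
    (hcommon : ∀ x y, G.Adj x y → #(G.neighborFinset x ∩ G.neighborFinset y) ≤ s)
    {v : V} {B : Finset V} (hB : 5 * s ≤ #B) {S : Finset V} (hS : S ⊆ G.neighborFinset v) :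
    ∑ a ∈ S, (#(G.neighborFinset a ∩ S) + #(G.neighborFinset a ∩ B)) ≤ #S * #B := by
  induction S using Finset.strongInduction with
  | H S ih =>
  have hinS {a : V} (ha : a ∈ S) {W : Finset V} (hW : W ⊆ S) : #(G.neighborFinset a ∩ W) ≤ s :=
    (card_le_card (inter_subset_inter_left (hW.trans hS))).trans
      (hcommon a v ((G.mem_neighborFinset v a).1 (hS ha)).symm)
  by_cases hedge : ∃ a₁ ∈ S, ∃ a₂ ∈ S, G.Adj a₁ a₂
  · obtain ⟨a₁, ha₁, a₂, ha₂, hadj⟩ := hedge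
    have hpair : {a₁, a₂} ⊆ S := insert_subset ha₁ (singleton_subset_iff.2 ha₂)
    set S' := S \ {a₁, a₂}
    have hS' : S' ⊆ S := sdiff_subset
    have hcard : #S = #S' + 2 := by rw [← card_pair hadj.ne, card_sdiff_add_card_eq_card hpair]
    have hsplit (g : V → ℕ) : ∑ a ∈ S, g a = ∑ a ∈ S', g a + (g a₁ + g a₂) := by
      rw [← sum_sdiff hpair, sum_pair hadj.ne]
    have hinner : ∑ a ∈ S, #(G.neighborFinset a ∩ S) ≤
        ∑ a ∈ S', #(G.neighborFinset a ∩ S') + 4 * s := by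
      rw [hsplit, sum_card_neighborFinset_inter_comm S' S, hsplit]
      linarith [hinS ha₁ subset_rfl, hinS ha₂ subset_rfl, hinS ha₁ hS', hinS ha₂ hS']
    have houter : ∑ a ∈ S, #(G.neighborFinset a ∩ B) ≤
        ∑ a ∈ S', #(G.neighborFinset a ∩ B) + (#B + s) := by
      rw [hsplit]
      linarith [card_inter_add_card_inter_le (G.neighborFinset a₁) (G.neighborFinset a₂) B,
        hcommon a₁ a₂ hadj]
    have hS'B := ih S' (sdiff_ssubset hpair (insert_nonempty _ _)) (hS'.trans hS)
    rw [sum_add_distrib] at hS'B ⊢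
    rw [hcard, add_mul]
    linarith
  · push Not at hedge
    calc _ ≤ ∑ _ ∈ S, #B := sum_le_sum fun a ha => ?_
      _ = #S * #B := by rw [sum_const, smul_eq_mul]
    have hempty : G.neighborFinset a ∩ S = ∅ :=
      eq_empty_of_forall_notMem fun b hb => by
        simp only [mem_inter, mem_neighborFinset] at hb
        exact hedge a ha b hb.2 hb.1
    rw [hempty, card_empty, zero_add]
    exact card_le_card inter_subset_right

end Counting

theorem card_edgeFinset_le_degree_mul_card_sub_degree {V : Type*} [Fintype V] [DecidableEq V]
    {G : SimpleGraph V} [DecidableRel G.Adj] {s : ℕ}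
    (hcommon : ∀ x y, G.Adj x y → #(G.neighborFinset x ∩ G.neighborFinset y) ≤ s) {v : V}
    (hmax : ∀ w, G.degree w ≤ G.degree v) (hB : 5 * s ≤ Fintype.card V - G.degree v) :
    #G.edgeFinset ≤ G.degree v * (Fintype.card V - G.degree v) := by
  set A := G.neighborFinset v
  have hA : #A = G.degree v := G.card_neighborFinset_eq_degree v
  have hAc : #Aᶜ = Fintype.card V - G.degree v := by rw [card_compl, hA]
  have hdeg (a : V) : G.degree a = #(G.neighborFinset a ∩ A) + #(G.neighborFinset a ∩ Aᶜ) := by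
    rw [← sdiff_eq_inter_compl, card_inter_add_card_sdiff, card_neighborFinset_eq_degree]
  have hsumA : ∑ a ∈ A, G.degree a ≤ #A * #Aᶜ := by
    simpa only [hdeg] using sum_card_neighborFinset_inter_le_card_mul hcommon (hAc ▸ hB) subset_rfl
  have hsumAc : ∑ a ∈ Aᶜ, G.degree a ≤ #Aᶜ * G.degree v := by
    simpa using sum_le_card_nsmul Aᶜ _ _ fun w _ => hmax w
  have hsum := G.sum_degrees_eq_twice_card_edges
  rw [← sum_add_sum_compl A] at hsum
  rw [hA, hAc] at hsumA
  rw [hAc] at hsumAc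
  linarith [mul_comm (Fintype.card V - G.degree v) (G.degree v)]

theorem book_free_edge_bound_general (t : ℕ) (β : ℝ) (hβ1 : β < 1) :
    ∃ n₀ : ℕ, ∀ n ≥ n₀, ∀ G : SimpleGraph (Fin n), ∀ Δ : ℕ,
      ¬ Contains (book t) G →
      (∀ v, (G.neighborSet v).ncard ≤ Δ) →
      (∃ v, (G.neighborSet v).ncard = Δ) →
      (n : ℝ) / 2 < (Δ : ℝ) → (Δ : ℝ) < β * n →
      G.edgeSet.ncard ≤ Δ * (n - Δ) := by
  refine ⟨⌈5 * t / (1 - β)⌉₊, fun n hn G Δ hfree hmax ⟨v, hv⟩ _ hΔ => ?_⟩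
  classical
  have hdeg (w : Fin n) : (G.neighborSet w).ncard = G.degree w := by
    rw [← Nat.card_coe_set_eq, Nat.card_eq_fintype_card, card_neighborSet_eq_degree]
  simp only [hdeg] at hmax hv
  subst hv
  have hcommon (x y : Fin n) (hxy : G.Adj x y) :
      #(G.neighborFinset x ∩ G.neighborFinset y) ≤ t :=
    (not_le.1 fun h => hfree (contains_book_of_le_card_inter_neighborFinset hxy h)).le
  have hgap : 5 * t ≤ n - G.degree v := by
    have h5t : (5 * t : ℝ) ≤ (1 - β) * n := (div_le_iff₀' (sub_pos.2 hβ1)).1 (Nat.ceil_le.1 hn)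
    have hle : ((5 * t + G.degree v : ℕ) : ℝ) ≤ n := by push_cast; linarith
    have := Nat.cast_le.1 hle
    omega
  rw [← coe_edgeFinset, Set.ncard_coe_finset]
  simpa using card_edgeFinset_le_degree_mul_card_sub_degree hcommon hmax (by simpa using hgap)

/-- for large `n`, a `B_t`-free graph on `n` vertices with maximum degree
`Δ` satisfying `n/2 < Δ < βn` has at most `Δ(n - Δ)` edges. -/
theorem book_free_edge_bound (t : ℕ) (ht : 0 < t) (β : ℝ) (hβ0 : 0 < β) (hβ1 : β < 1) :
    ∃ n₀ : ℕ, ∀ n ≥ n₀, ∀ G : SimpleGraph (Fin n), ∀ Δ : ℕ,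
      ¬ Contains (book t) G →
      (∀ v, (G.neighborSet v).ncard ≤ Δ) →
      (∃ v, (G.neighborSet v).ncard = Δ) →
      (n : ℝ) / 2 < (Δ : ℝ) → (Δ : ℝ) < β * n →
      G.edgeSet.ncard ≤ Δ * (n - Δ) :=
  book_free_edge_bound_general t β hβ1
end

section
/- Let t be a positive integer and 0 < β < 1. There exist a constant c > 0 (depending only on β and t) and n₀ such that for every n ≥ n₀ the following holds: if G is a B_t-free graph on n vertices whose maximum degree Δ satisfies n/2 < Δ < βn, and G contains a triangle, then G has at most Δ(n−Δ) − c·n edges. -/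
open SimpleGraph

/-!
Let `v` have degree `Δ`, `N = N(v)`, and let `m` count the non-adjacent pairs in `N × Nᶜ`.
Book-freeness bounds the codegree of every edge by `t`; in particular each vertex of `N` has at
most `t` neighbours in `N`. Counting degrees, `2e(G) = 2Δ(n - Δ) - 2m + 2e(N) + 2e(Nᶜ)`.
Since every degree is at most `Δ = |N|`, a vertex of `Nᶜ` misses at least as many vertices of `N`
as it has neighbours in `Nᶜ`, so `2e(Nᶜ) ≤ m`. The two ends of an edge of `N` have at most `t`
common neighbours, so together they miss at least `n - Δ - t` vertices of `Nᶜ`; summing over the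
edges of `N` gives `2e(N) ≤ m / 2` once `n - Δ > 5t`. Hence `4e(G) ≤ 4Δ(n - Δ) - m`. Finally a
triangle has an edge with both ends on the same side of `(N, Nᶜ)`, which forces
`m ≥ min(Δ, n - Δ) - t = n - Δ - t > (1 - β)n - t`.
-/

open Finset

theorem Nat.two_mul_le_of_mul_le_add {k S b m : ℕ} (h : S * b ≤ k * S + 2 * k * m)
    (hb : 5 * k + 1 ≤ b) : 2 * S ≤ m := by
  nlinarith

namespace SimpleGraph

section Degree

variable {V : Type*} [Fintype V] {G : SimpleGraph V} [DecidableRel G.Adj]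

theorem ncard_neighborSet_eq_degree (v : V) : (G.neighborSet v).ncard = G.degree v := by
  rw [Set.ncard_eq_toFinset_card', ← neighborFinset_def, card_neighborFinset_eq_degree]

theorem ncard_edgeSet_eq_card_edgeFinset : G.edgeSet.ncard = #G.edgeFinset := by
  rw [← coe_edgeFinset, Set.ncard_coe_finset]

end Degree

variable {V : Type*} [Fintype V] [DecidableEq V] (G : SimpleGraph V) [DecidableRel G.Adj]

def codegree (x y : V) : ℕ := #(G.neighborFinset x ∩ G.neighborFinset y)

theorem book_adj_iff {t : ℕ} {a b : Fin (t + 2)} :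
    (book t).Adj a b ↔ a ≠ b ∧ (a = 0 ∨ a = 1 ∨ b = 0 ∨ b = 1) := by
  simp only [book, fromRel_adj, Fin.ext_iff, Fin.val_zero, Fin.val_one]
  omega

theorem contains_book_of_le_codegree {t : ℕ} {x y : V} (hxy : G.Adj x y)
    (ht : t ≤ G.codegree x y) : Contains (book t) G := by
  set e : Fin t ↪ V := (Fin.castLEEmb ht).trans
    ((equivFin _).symm.toEmbedding.trans (Function.Embedding.subtype _))
  have he (i : Fin t) : G.Adj x (e i) ∧ G.Adj y (e i) := by
    have := ((equivFin (G.neighborFinset x ∩ G.neighborFinset y)).symm (Fin.castLE ht i)).2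
    rwa [mem_inter, mem_neighborFinset, mem_neighborFinset] at this
  set g : Fin (t + 2) → V := Fin.cons x (Fin.cons y e)
  have hspine (b : Fin (t + 2)) : (b ≠ 0 → G.Adj x (g b)) ∧ (b ≠ 1 → G.Adj y (g b)) := by
    cases b using Fin.cases with
    | zero => simp [g, hxy.symm]
    | succ b => cases b using Fin.cases with
      | zero => simp [g, hxy]
      | succ i => simp [g, he i]
  refine ⟨⟨g, fun {a b} hab => ?_⟩, ?_⟩
  · obtain ⟨hne, rfl | rfl | rfl | rfl⟩ := book_adj_iff.mp hab
    · exact (hspine b).1 hne.symm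
    · exact (hspine b).2 hne.symm
    · exact ((hspine a).1 hne).symm
    · exact ((hspine a).2 hne).symm
  · change Function.Injective (Fin.cons x (Fin.cons y e) : Fin (t + 2) → V)
    simp only [Fin.cons_injective_iff, e.injective, Set.mem_range, not_exists, and_true]
    refine ⟨fun i => ?_, fun i => (he i).2.ne'⟩
    cases i using Fin.cases
    · exact hxy.ne'
    · exact (he _).1.ne'

theorem codegree_lt_of_not_contains_book {t : ℕ} (hG : ¬ Contains (book t) G) {x y : V}
    (hxy : G.Adj x y) : G.codegree x y < t :=
  lt_of_not_ge fun ht => hG (contains_book_of_le_codegree G hxy ht)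

variable (s : Finset V)

def crossNonEdges : ℕ := ∑ x ∈ s, #(sᶜ \ G.neighborFinset x)

def innerDegreeSum : ℕ := ∑ x ∈ s, #(s ∩ G.neighborFinset x)

theorem sdiff_neighborFinset_eq_filter (x : V) :
    s \ G.neighborFinset x = {y ∈ s | ¬ G.Adj x y} := by
  ext y; simp

theorem crossNonEdges_compl : G.crossNonEdges sᶜ = G.crossNonEdges s := by
  simp only [crossNonEdges, compl_compl, sdiff_neighborFinset_eq_filter]
  have := sum_card_bipartiteAbove_eq_sum_card_bipartiteBelow (s := s) (t := sᶜ)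
    (r := fun x u => ¬ G.Adj x u)
  simp only [bipartiteAbove, bipartiteBelow, G.adj_comm] at this
  exact this.symm

theorem degree_add_card_compl_sdiff (x : V) :
    G.degree x + #(sᶜ \ G.neighborFinset x) = #(s ∩ G.neighborFinset x) + #sᶜ := by
  have h₁ := card_inter_add_card_sdiff (G.neighborFinset x) s
  have h₂ := card_sdiff_add_card_inter sᶜ (G.neighborFinset x)
  have h₃ : sᶜ ∩ G.neighborFinset x = G.neighborFinset x \ s := by ext; simp [and_comm]
  rw [card_neighborFinset_eq_degree, inter_comm] at h₁
  rw [h₃] at h₂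
  omega

theorem sum_degree_add_crossNonEdges :
    ∑ x ∈ s, G.degree x + G.crossNonEdges s = G.innerDegreeSum s + #s * #sᶜ := by
  rw [crossNonEdges, innerDegreeSum, ← sum_add_distrib,
    sum_congr rfl fun x _ => G.degree_add_card_compl_sdiff s x, sum_add_distrib, sum_const,
    smul_eq_mul]

theorem two_mul_card_edgeFinset_add_two_mul_crossNonEdges :
    2 * #G.edgeFinset + 2 * G.crossNonEdges s =
      G.innerDegreeSum s + G.innerDegreeSum sᶜ + 2 * (#s * #sᶜ) := by
  have hs := G.sum_degree_add_crossNonEdges s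
  have hsc := G.sum_degree_add_crossNonEdges sᶜ
  rw [crossNonEdges_compl, compl_compl] at hsc
  rw [← sum_degrees_eq_twice_card_edges, ← sum_add_sum_compl s]
  linarith [Nat.mul_comm #s #sᶜ]

theorem innerDegreeSum_compl_le_crossNonEdges (hdeg : ∀ u, G.degree u ≤ #s) :
    G.innerDegreeSum sᶜ ≤ G.crossNonEdges s := by
  rw [← crossNonEdges_compl, crossNonEdges, innerDegreeSum, compl_compl]
  refine sum_le_sum fun u _ => ?_
  have h₁ := G.degree_add_card_compl_sdiff s u
  have h₂ := card_sdiff_add_card_inter s (G.neighborFinset u)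
  have h₃ := card_sdiff_add_card_inter sᶜ (G.neighborFinset u)
  have := hdeg u
  omega

variable {G s} {k : ℕ}

theorem card_le_card_sdiff_add_card_sdiff_add {x y : V} (hxy : G.codegree x y ≤ k)
    (A : Finset V) :
    #A ≤ #(A \ G.neighborFinset x) + #(A \ G.neighborFinset y) + k := by
  have hunion : #(A ∩ G.neighborFinset x ∪ A ∩ G.neighborFinset y) ≤ #A :=
    card_le_card (union_subset inter_subset_left inter_subset_left)
  have hinter : #(A ∩ G.neighborFinset x ∩ (A ∩ G.neighborFinset y)) ≤ k :=
    (card_le_card fun z hz => by simp_all).trans hxy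
  have := card_union_add_card_inter (A ∩ G.neighborFinset x) (A ∩ G.neighborFinset y)
  have := card_sdiff_add_card_inter A (G.neighborFinset x)
  have := card_sdiff_add_card_inter A (G.neighborFinset y)
  omega

theorem card_compl_le_crossNonEdges_add
    (hk : ∀ x y, G.Adj x y → G.codegree x y ≤ k) {x y : V} (hx : x ∈ s) (hy : y ∈ s)
    (hxy : G.Adj x y) :
    #sᶜ ≤ G.crossNonEdges s + k := by
  have hpair :
      #(sᶜ \ G.neighborFinset x) + #(sᶜ \ G.neighborFinset y) ≤ G.crossNonEdges s := by
    rw [crossNonEdges, ← sum_pair (f := fun z => #(sᶜ \ G.neighborFinset z)) hxy.ne]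
    exact sum_le_sum_of_subset (insert_subset hx (singleton_subset_iff.mpr hy))
  linarith [card_le_card_sdiff_add_card_sdiff_add (hk x y hxy) sᶜ]

theorem min_card_le_crossNonEdges_add
    (hk : ∀ x y, G.Adj x y → G.codegree x y ≤ k) {a b c : V} (hab : G.Adj a b)
    (hbc : G.Adj b c) (hac : G.Adj a c) : min #s #sᶜ ≤ G.crossNonEdges s + k := by
  obtain ⟨x, y, hxy, hside⟩ : ∃ x y, G.Adj x y ∧ (x ∈ s ↔ y ∈ s) := by
    by_cases h₁ : a ∈ s ↔ b ∈ s
    · exact ⟨a, b, hab, h₁⟩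
    by_cases h₂ : a ∈ s ↔ c ∈ s
    · exact ⟨a, c, hac, h₂⟩
    exact ⟨b, c, hbc, by tauto⟩
  by_cases hx : x ∈ s
  · exact (min_le_right _ _).trans (card_compl_le_crossNonEdges_add hk hx (hside.mp hx) hxy)
  · have := card_compl_le_crossNonEdges_add (s := sᶜ) hk (mem_compl.mpr hx)
      (mem_compl.mpr (hside.not.mp hx)) hxy
    rw [compl_compl, crossNonEdges_compl] at this
    exact (min_le_left _ _).trans this

theorem innerDegreeSum_mul_card_compl_le
    (hk : ∀ x y, G.Adj x y → G.codegree x y ≤ k)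
    (hs : ∀ x ∈ s, #(s ∩ G.neighborFinset x) ≤ k) :
    G.innerDegreeSum s * #sᶜ ≤ k * G.innerDegreeSum s + 2 * k * G.crossNonEdges s := by
  set m : V → ℕ := fun x => #(sᶜ \ G.neighborFinset x)
  have hswap : ∑ x ∈ s, ∑ y ∈ s ∩ G.neighborFinset x, m y =
      ∑ x ∈ s, ∑ _y ∈ s ∩ G.neighborFinset x, m x :=
    sum_comm' fun x y => by simp only [mem_inter, mem_neighborFinset, G.adj_comm]; tauto
  have hweighted : ∑ x ∈ s, ∑ _y ∈ s ∩ G.neighborFinset x, m x ≤ k * G.crossNonEdges s := by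
    rw [crossNonEdges, mul_sum]
    refine sum_le_sum fun x hx => ?_
    rw [sum_const, smul_eq_mul]
    exact Nat.mul_le_mul_right _ (hs x hx)
  calc G.innerDegreeSum s * #sᶜ
      = ∑ x ∈ s, ∑ y ∈ s ∩ G.neighborFinset x, #sᶜ := by
        simp only [innerDegreeSum, sum_mul, sum_const, smul_eq_mul]
    _ ≤ ∑ x ∈ s, ∑ y ∈ s ∩ G.neighborFinset x, (m x + m y + k) :=
        sum_le_sum fun x _ => sum_le_sum fun y hy =>
          card_le_card_sdiff_add_card_sdiff_add (hk x y (by simp_all)) sᶜ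
    _ = 2 * ∑ x ∈ s, ∑ _y ∈ s ∩ G.neighborFinset x, m x + G.innerDegreeSum s * k := by
        simp only [sum_add_distrib, hswap, innerDegreeSum, sum_const, smul_eq_mul, sum_mul]
        ring
    _ ≤ k * G.innerDegreeSum s + 2 * k * G.crossNonEdges s := by linarith

theorem four_mul_card_edgeFinset_add_min_le (hk : ∀ x y, G.Adj x y → G.codegree x y ≤ k)
    (hs : ∀ x ∈ s, #(s ∩ G.neighborFinset x) ≤ k)
    (hdeg : ∀ u, G.degree u ≤ #s) {a b c : V} (hab : G.Adj a b) (hbc : G.Adj b c)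
    (hac : G.Adj a c) (hlarge : 5 * k + 1 ≤ #sᶜ) :
    4 * #G.edgeFinset + min #s #sᶜ ≤ 4 * (#s * #sᶜ) + k := by
  have hid := G.two_mul_card_edgeFinset_add_two_mul_crossNonEdges s
  have hcompl := G.innerDegreeSum_compl_le_crossNonEdges s hdeg
  have hinner := Nat.two_mul_le_of_mul_le_add (innerDegreeSum_mul_card_compl_le hk hs) hlarge
  have hmin := min_card_le_crossNonEdges_add (s := s) hk hab hbc hac
  omega

end SimpleGraph

theorem book_free_triangle_edge_bound_general (t : ℕ) (β : ℝ) (hβ1 : β < 1) :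
    ∃ c : ℝ, 0 < c ∧ ∃ n₀ : ℕ, ∀ n ≥ n₀, ∀ G : SimpleGraph (Fin n), ∀ Δ : ℕ,
      ¬ Contains (book t) G →
      (∀ v, (G.neighborSet v).ncard ≤ Δ) →
      (∃ v, (G.neighborSet v).ncard = Δ) →
      (n : ℝ) / 2 < (Δ : ℝ) → (Δ : ℝ) < β * n →
      Contains (⊤ : SimpleGraph (Fin 3)) G →
      (G.edgeSet.ncard : ℝ) ≤ (Δ : ℝ) * ((n : ℝ) - (Δ : ℝ)) - c * n := by
  refine ⟨(1 - β) / 8, by linarith, ⌈10 * (t + 1) / (1 - β)⌉₊,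
    fun n hn G Δ hbook hmax ⟨v, hv⟩ hlo hhi ⟨f, _⟩ => ?_⟩
  classical
  have hlarge : 10 * ((t : ℝ) + 1) ≤ (1 - β) * n := by
    rw [← div_le_iff₀' (by linarith)]
    exact (Nat.le_ceil _).trans (by exact_mod_cast hn)
  have hhalf : n < 2 * Δ := by exact_mod_cast (by linarith : (n : ℝ) < 2 * Δ)
  have hgap : 5 * t + 1 + Δ ≤ n := by
    have : ((5 * t + 1 + Δ : ℕ) : ℝ) ≤ n := by push_cast; linarith
    exact_mod_cast this
  simp only [ncard_neighborSet_eq_degree] at hmax hv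
  rw [← card_neighborFinset_eq_degree] at hv
  have hcompl : #(G.neighborFinset v)ᶜ = n - Δ := by rw [card_compl, Fintype.card_fin, hv]
  have hcodeg (x y : Fin n) (hxy : G.Adj x y) : G.codegree x y ≤ t :=
    (codegree_lt_of_not_contains_book G hbook hxy).le
  have hcore := four_mul_card_edgeFinset_add_min_le hcodeg
    (fun x hx => hcodeg v x ((mem_neighborFinset G v x).mp hx)) (fun u => hv ▸ hmax u)
    (f.map_rel (by decide : (⊤ : SimpleGraph (Fin 3)).Adj 0 1))
    (f.map_rel (by decide : (⊤ : SimpleGraph (Fin 3)).Adj 1 2))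
    (f.map_rel (by decide : (⊤ : SimpleGraph (Fin 3)).Adj 0 2)) (by omega)
  rw [hv, hcompl, min_eq_right (by omega)] at hcore
  have hcoreℝ := (Nat.cast_le (α := ℝ)).mpr hcore
  push_cast [Nat.cast_sub (by omega : Δ ≤ n)] at hcoreℝ
  rw [ncard_edgeSet_eq_card_edgeFinset]
  nlinarith

/-- for large `n`, a `B_t`-free graph on `n` vertices containing a triangle,
with maximum degree `Δ` satisfying `n/2 < Δ < βn`, has at most `Δ(n - Δ) - cn` edges. -/
theorem book_free_triangle_edge_bound (t : ℕ) (ht : 0 < t) (β : ℝ)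
    (hβ0 : 0 < β) (hβ1 : β < 1) :
    ∃ c : ℝ, 0 < c ∧ ∃ n₀ : ℕ, ∀ n ≥ n₀, ∀ G : SimpleGraph (Fin n), ∀ Δ : ℕ,
      ¬ Contains (book t) G →
      (∀ v, (G.neighborSet v).ncard ≤ Δ) →
      (∃ v, (G.neighborSet v).ncard = Δ) →
      (n : ℝ) / 2 < (Δ : ℝ) → (Δ : ℝ) < β * n →
      Contains (⊤ : SimpleGraph (Fin 3)) G →
      (G.edgeSet.ncard : ℝ) ≤ (Δ : ℝ) * ((n : ℝ) - (Δ : ℝ)) - c * n :=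
  book_free_triangle_edge_bound_general t β hβ1
end
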